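/- arXiv:1511.01398 — 7 statements merged into one kernel-verified Lean document; each statement's English description precedes it below -/
import Mathlib

section
/- Let G be a finite graph of maximum degree at most 3, let S be a set of vertices of G, and let u be a vertex of G with degree at most 2. Then w_{(G,S)}(u) ≤ 2. -/
open Finset

/-- `sdist G S u v` : minimum number of edges of a walk in `G` from `u` to `v`
whose only vertex in `S` is the endvertex `v` (`⊤` if none exists). -/
noncomputable def sdist {V : Type*} (G : SimpleGraph V) (S : Set V) (u v : V) : ℕ∞ :=
  ⨅ p : {p : G.Walk u v // ∀ x ∈ p.support, x ∈ S → x = v}, ((p : G.Walk u v).length : ℕ∞)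

/-- `expWeight G S u = ∑_{v ∈ S} (1/2)^(sdist G S u v - 1)`, with `(1/2)^∞ = 0`.
Note `(1/2)^(d-1) = 2 * (1/2)^d`. -/
noncomputable def expWeight {V : Type*} (G : SimpleGraph V) (S : Finset V) (u : V) : ℝ :=
  ∑ v ∈ S, if sdist G (↑S) u v = ⊤ then 0 else 2 * (1 / 2 : ℝ) ^ (sdist G (↑S) u v).toNat

/-- `S` is an exponential dominating set of `G`. -/
def IsExpDomSet {V : Type*} (G : SimpleGraph V) (S : Finset V) : Prop :=
  ∀ u, u ∉ S → 1 ≤ expWeight G S u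

/-- The exponential domination number of `G`. -/
noncomputable def expDomNum (V : Type*) [Fintype V] (G : SimpleGraph V) : ℕ :=
  sInf {k | ∃ S : Finset V, IsExpDomSet G S ∧ S.card = k}

/-! ### Auxiliary development: binary codes for non-backtracking walks -/

section Enc
variable {V : Type*}

open Classical in
/-- A function `V → Fin 2` injective on `s` when `s.card ≤ 2`. -/
noncomputable def pick (s : Finset V) (x : V) : Fin 2 :=
  if h : s.card ≤ 2 ∧ x ∈ s then
    Fin.castLE h.1 (Fin.cast (Fintype.card_coe s) ((Fintype.equivFin s) ⟨x, h.2⟩))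
  else 0

lemma pick_injOn (s : Finset V) (h : s.card ≤ 2) : Set.InjOn (pick s) ↑s := by
  intro a ha b hb hab
  simp only [Finset.mem_coe] at ha hb
  unfold pick at hab
  rw [dif_pos ⟨h, ha⟩, dif_pos ⟨h, hb⟩] at hab
  have := (Fintype.equivFin s).injective
    (Fin.cast_injective _ (Fin.castLE_injective h hab))
  exact Subtype.ext_iff.mp this

variable (G : SimpleGraph V) [DecidableRel G.Adj] [Fintype V] (u : V)

open Classical in
/-- allowed continuations from state (prev, cur) -/
noncomputable def encA (prev : Option V) (cur : V) : Finset V :=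
  match prev with
  | none => if cur = u then G.neighborFinset u else ∅
  | some p => if G.Adj p cur then G.neighborFinset cur \ {p} else ∅

lemma encA_card (hG : ∀ v, G.degree v ≤ 3) (hu : G.degree u ≤ 2) (prev : Option V) (cur : V) :
    (encA G u prev cur).card ≤ 2 := by
  classical
  match prev with
  | none =>
    simp only [encA]
    split
    · rwa [SimpleGraph.card_neighborFinset_eq_degree]
    · simp
  | some p =>
    simp only [encA]
    split
    · rename_i hadj
      have hp : {p} ⊆ G.neighborFinset cur := by
        simp [SimpleGraph.mem_neighborFinset, hadj.symm]
      rw [Finset.card_sdiff_of_subset hp, Finset.card_singleton,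
        SimpleGraph.card_neighborFinset_eq_degree]
      have := hG cur
      omega
    · simp

noncomputable def encList : Option V → V → List V → List (Fin 2)
  | _, _, [] => []
  | prev, cur, h :: t => pick (encA G u prev cur) h :: encList (some cur) h t

def ValidL : Option V → V → List V → Prop
  | _, _, [] => True
  | prev, cur, h :: t => h ∈ encA G u prev cur ∧ ValidL (some cur) h t

lemma encList_length (l : List V) : ∀ (prev : Option V) (cur : V),
    (encList G u prev cur l).length = l.length := by
  induction l with
  | nil => intro _ _; rfl
  | cons h t ih => intro prev cur; simp only [encList, List.length_cons, ih (some cur) h]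

lemma dec_prefix (hG : ∀ v, G.degree v ≤ 3) (hu : G.degree u ≤ 2) (l1 : List V) :
    ∀ (l2 : List V) (prev : Option V) (cur : V), ValidL G u prev cur l1 →
      ValidL G u prev cur l2 →
      encList G u prev cur l1 <+: encList G u prev cur l2 → l1 <+: l2 := by
  induction l1 with
  | nil => intro _ _ _ _ _ _; exact List.nil_prefix
  | cons h1 t1 ih =>
    intro l2 prev cur hv1 hv2 hpre
    cases l2 with
    | nil =>
      simp only [encList] at hpre
      exact absurd hpre.length_le (by simp)
    | cons h2 t2 =>
      simp only [encList, List.cons_prefix_cons] at hpre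
      obtain ⟨he, hpre⟩ := hpre
      obtain ⟨hm1, hv1'⟩ := hv1
      obtain ⟨hm2, hv2'⟩ := hv2
      have h12 : h1 = h2 :=
        pick_injOn _ (encA_card G u hG hu prev cur) hm1 hm2 he
      subst h12
      exact List.cons_prefix_cons.mpr ⟨rfl, ih t2 (some cur) h1 hv1' hv2' hpre⟩

lemma valid_tail {a b : V} (q : G.Walk a b) (hq : q.IsPath) :
    ∀ (p : V), G.Adj p a → p ∉ q.support → ValidL G u (some p) a q.support.tail := by
  induction q with
  | nil => intro p _ _; simp only [SimpleGraph.Walk.support_nil, List.tail_cons]; trivial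
  | @cons a c b hac q' ih =>
    intro p hadj hp
    rw [SimpleGraph.Walk.cons_isPath_iff] at hq
    simp only [SimpleGraph.Walk.support_cons, List.tail_cons]
    rw [q'.support_eq_cons]
    refine ⟨?_, ?_⟩
    · show c ∈ encA G u (some p) a
      classical
      simp only [encA, if_pos hadj, Finset.mem_sdiff, SimpleGraph.mem_neighborFinset,
        Finset.mem_singleton]
      refine ⟨hac, ?_⟩
      rintro rfl
      exact hp (by simp [SimpleGraph.Walk.support_cons, q'.start_mem_support])
    · exact ih hq.1 a hac hq.2

lemma valid_root {w : V} (p : G.Walk u w) (hp : p.IsPath) :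
    ValidL G u none u p.support.tail := by
  cases p with
  | nil => simp only [SimpleGraph.Walk.support_nil, List.tail_cons]; trivial
  | @cons _ c _ huc q' =>
    rw [SimpleGraph.Walk.cons_isPath_iff] at hp
    simp only [SimpleGraph.Walk.support_cons, List.tail_cons]
    rw [q'.support_eq_cons]
    refine ⟨?_, ?_⟩
    · show c ∈ encA G u none u
      classical
      simp only [encA, if_pos rfl, if_true, SimpleGraph.mem_neighborFinset]
      simpa using huc
    · exact valid_tail G u q' hp.1 u huc hp.2

end Enc

/-! ### Auxiliary facts about `sdist` -/

lemma sdist_exists {V : Type*} (G : SimpleGraph V) (S : Set V) (u v : V)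
    (h : sdist G S u v ≠ ⊤) :
    ∃ p : G.Walk u v, (∀ x ∈ p.support, x ∈ S → x = v) ∧ p.IsPath ∧
      (p.length : ℕ∞) = sdist G S u v := by
  classical
  have hne : Nonempty {p : G.Walk u v // ∀ x ∈ p.support, x ∈ S → x = v} := by
    by_contra hne
    rw [not_nonempty_iff] at hne
    exact h (iInf_of_empty _)
  set N : Set ℕ := {n | ∃ p : G.Walk u v, (∀ x ∈ p.support, x ∈ S → x = v) ∧ p.length = n}
    with hN
  have hNne : N.Nonempty := ⟨hne.some.1.length, hne.some.1, hne.some.2, rfl⟩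
  obtain ⟨p0, hp0, hlen0⟩ := Nat.sInf_mem hNne
  have hsd : sdist G S u v = ((sInf N : ℕ) : ℕ∞) := by
    apply le_antisymm
    · rw [← hlen0]
      exact iInf_le (fun p : {p : G.Walk u v // ∀ x ∈ p.support, x ∈ S → x = v} =>
        ((p : G.Walk u v).length : ℕ∞)) ⟨p0, hp0⟩
    · apply le_iInf
      rintro ⟨q, hq⟩
      exact Nat.cast_le.mpr (Nat.sInf_le (show q.length ∈ N from ⟨q, hq, rfl⟩))
  refine ⟨p0.bypass, ?_, p0.bypass_isPath, ?_⟩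
  · intro x hx hxS
    exact hp0 x (p0.support_bypass_subset hx) hxS
  · rw [hsd]
    have h1 : p0.bypass.length ≤ sInf N := hlen0 ▸ p0.length_bypass_le
    have h2 : sInf N ≤ p0.bypass.length := Nat.sInf_le ⟨p0.bypass,
      fun x hx hxS => hp0 x (p0.support_bypass_subset hx) hxS, rfl⟩
    exact congrArg Nat.cast (le_antisymm h1 h2)

lemma sdist_self {V : Type*} (G : SimpleGraph V) (S : Set V) (u : V) :
    sdist G S u u = 0 := by
  apply le_antisymm _ zero_le
  have : ((SimpleGraph.Walk.nil : G.Walk u u).length : ℕ∞) = 0 := by simp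
  rw [← this]
  exact iInf_le (fun p : {p : G.Walk u u // ∀ x ∈ p.support, x ∈ S → x = u} =>
    ((p : G.Walk u u).length : ℕ∞)) ⟨SimpleGraph.Walk.nil, by simp⟩

lemma sdist_top {V : Type*} (G : SimpleGraph V) (S : Set V) (u v : V) (hu : u ∈ S)
    (huv : u ≠ v) : sdist G S u v = ⊤ := by
  have : IsEmpty {p : G.Walk u v // ∀ x ∈ p.support, x ∈ S → x = v} := by
    constructor
    rintro ⟨p, hp⟩
    exact huv (hp u p.start_mem_support hu)
  exact iInf_of_empty _

theorem stmt0 {V : Type*} [Fintype V] (G : SimpleGraph V) [DecidableRel G.Adj]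
    (hG : ∀ v, G.degree v ≤ 3) (S : Finset V) (u : V) (hu : G.degree u ≤ 2) :
    expWeight G S u ≤ 2 := by
  classical
  by_cases huS : u ∈ S
  -- Case u ∈ S : the only contribution is from u itself (weight 2).
  · rw [expWeight, Finset.sum_eq_single_of_mem u huS]
    · rw [sdist_self]
      norm_num
    · intro b hb hbu
      rw [sdist_top G (↑S) u b (by exact_mod_cast huS) (Ne.symm hbu)]
      simp
  -- Case u ∉ S.
  · set T : Finset V := S.filter (fun v => sdist G (↑S) u v ≠ ⊤) with hT
    have key : ∀ v : {x // x ∈ T}, ∃ p : G.Walk u v.1,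
        (∀ x ∈ p.support, x ∈ (↑S : Set V) → x = v.1) ∧ p.IsPath ∧
          (p.length : ℕ∞) = sdist G (↑S) u v.1 := by
      rintro ⟨v, hv⟩
      rw [hT, Finset.mem_filter] at hv
      exact sdist_exists G (↑S) u v hv.2
    choose pth hQ hPath hlen using key
    set d : {x // x ∈ T} → ℕ := fun v => (pth v).length with hdDef
    have hvS : ∀ v : {x // x ∈ T}, v.1 ∈ S := fun v => (Finset.mem_filter.mp v.2).1
    have hd1 : ∀ v, 1 ≤ d v := by
      intro v
      by_contra hc
      have hdv : d v = (pth v).length := rfl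
      have h0 : (pth v).length = 0 := by omega
      have := SimpleGraph.Walk.eq_of_length_eq_zero h0
      exact huS (this ▸ hvS v)
    set D : ℕ := Finset.univ.sup d with hD
    have hdD : ∀ v, d v ≤ D := fun v => Finset.le_sup (Finset.mem_univ v)
    set code : {x // x ∈ T} → List (Fin 2) :=
      fun v => encList G u none u (pth v).support.tail with hcode
    have hcodelen : ∀ v, (code v).length = d v := by
      intro v
      rw [hcode]
      rw [encList_length, List.length_tail, SimpleGraph.Walk.length_support]
      rfl
    have hvalid : ∀ v, ValidL G u none u (pth v).support.tail :=
      fun v => valid_root G u (pth v) (hPath v)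
    set L : (Σ v : {x // x ∈ T}, Fin (D - d v) → Fin 2) → List (Fin 2) :=
      fun x => code x.1 ++ List.ofFn x.2 with hL
    have hLlen : ∀ x, (L x).length = D := by
      intro x
      rw [hL]
      simp only [List.length_append, List.length_ofFn, hcodelen]
      have := hdD x.1
      omega
    -- the core injectivity argument via prefix-freeness of the codes
    have core : ∀ x y : (Σ v : {x // x ∈ T}, Fin (D - d v) → Fin 2),
        L x = L y → d x.1 ≤ d y.1 → x.1 = y.1 := by
      intro x y hxy hdle
      have hpx : code x.1 <+: L y := hxy ▸ List.prefix_append _ _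
      have hpy : code y.1 <+: L y := List.prefix_append _ _
      have hcc : code x.1 <+: code y.1 :=
        List.prefix_of_prefix_length_le hpx hpy (by rw [hcodelen, hcodelen]; exact hdle)
      have htails : (pth x.1).support.tail <+: (pth y.1).support.tail :=
        dec_prefix G u hG hu _ _ none u (hvalid x.1) (hvalid y.1) hcc
      have hvmem : (x.1 : V) ∈ (pth x.1).support.tail := by
        have h1 : (x.1 : V) ∈ (pth x.1).support := SimpleGraph.Walk.end_mem_support _
        rw [(pth x.1).support_eq_cons] at h1
        rcases List.mem_cons.mp h1 with h | h
        · exact absurd (h ▸ hvS x.1) huS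
        · exact h
      have hvmem' : (x.1 : V) ∈ (pth y.1).support := by
        rw [(pth y.1).support_eq_cons]
        exact List.mem_cons_of_mem _ (htails.subset hvmem)
      exact Subtype.ext (hQ y.1 _ hvmem' (by exact_mod_cast hvS x.1))
    -- the full injection into `Fin D → Fin 2`
    set F : (Σ v : {x // x ∈ T}, Fin (D - d v) → Fin 2) → (Fin D → Fin 2) :=
      fun x i => (L x).get (Fin.cast (hLlen x).symm i) with hF
    have hFinj : Function.Injective F := by
      intro x y hxy
      have hLeq : L x = L y := by
        apply List.ext_get (by rw [hLlen, hLlen])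
        intro n h1 h2
        have hn : n < D := by rw [hLlen] at h1; exact h1
        have := congrFun hxy ⟨n, hn⟩
        simpa [hF, Fin.cast] using this
      have h1 : x.1 = y.1 := by
        rcases le_total (d x.1) (d y.1) with h | h
        · exact core x y hLeq h
        · exact (core y x hLeq.symm h).symm
      obtain ⟨v1, g1⟩ := x
      obtain ⟨v2, g2⟩ := y
      cases h1
      have : List.ofFn g1 = List.ofFn g2 := by
        have := hLeq
        rw [hL] at this
        exact List.append_cancel_left this
      rw [List.ofFn_inj] at this
      rw [this]
    -- counting
    have hcard : ∑ v : {x // x ∈ T}, 2 ^ (D - d v) ≤ 2 ^ D := by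
      have h1 : Fintype.card (Σ v : {x // x ∈ T}, Fin (D - d v) → Fin 2) =
          ∑ v : {x // x ∈ T}, 2 ^ (D - d v) := by
        rw [Fintype.card_sigma]
        congr 1
        funext v
        rw [Fintype.card_fun]
        simp
      have h2 : Fintype.card (Fin D → Fin 2) = 2 ^ D := by
        rw [Fintype.card_fun]; simp
      calc ∑ v : {x // x ∈ T}, 2 ^ (D - d v)
          = Fintype.card (Σ v : {x // x ∈ T}, Fin (D - d v) → Fin 2) := h1.symm
        _ ≤ Fintype.card (Fin D → Fin 2) := Fintype.card_le_of_injective F hFinj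
        _ = 2 ^ D := h2
    -- transfer to the reals
    have hreal : ∑ v : {x // x ∈ T}, ((1 : ℝ)/2) ^ (d v) ≤ 1 := by
      have hterm : ∀ v : {x // x ∈ T}, ((1 : ℝ)/2) ^ (d v) =
          ((2 : ℝ) ^ (D - d v)) / 2 ^ D := by
        intro v
        have h2 : (2:ℝ)^(D - d v) * 2^(d v) = 2^D := by
          rw [← pow_add]
          congr 1
          have := hdD v
          omega
        rw [eq_div_iff (by positivity), ← h2, div_pow, one_pow]
        field_simp
      calc ∑ v : {x // x ∈ T}, ((1 : ℝ)/2) ^ (d v)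
          = (∑ v : {x // x ∈ T}, ((2 : ℝ) ^ (D - d v))) / 2 ^ D := by
            rw [Finset.sum_div]; exact Finset.sum_congr rfl fun v _ => hterm v
        _ ≤ (2 ^ D : ℝ) / 2 ^ D := by
            gcongr
            exact_mod_cast hcard
        _ = 1 := div_self (by positivity)
    -- rewrite the weight as a sum over T
    have hW : expWeight G S u = ∑ v : {x // x ∈ T}, 2 * ((1 : ℝ)/2) ^ (d v) := by
      rw [expWeight]
      have h1 : ∑ v ∈ S, (if sdist G (↑S) u v = ⊤ then (0:ℝ) else
          2 * (1 / 2 : ℝ) ^ (sdist G (↑S) u v).toNat) =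
          ∑ v ∈ T, 2 * (1 / 2 : ℝ) ^ (sdist G (↑S) u v).toNat := by
        rw [hT, Finset.sum_filter]
        apply Finset.sum_congr rfl
        intro v _
        by_cases h : sdist G (↑S) u v = ⊤ <;> simp [h]
      rw [h1, ← Finset.sum_coe_sort T]
      apply Finset.sum_congr rfl
      intro v _
      congr 1
      rw [← hlen v]
      simp [hdDef]
    rw [hW, ← Finset.mul_sum]
    calc 2 * ∑ v : {x // x ∈ T}, ((1 : ℝ)/2) ^ (d v) ≤ 2 * 1 := by
          apply mul_le_mul_of_nonneg_left hreal (by norm_num)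
      _ = 2 := by norm_num
end

section
/- Let G be a finite graph of maximum degree at most 3, let S be a set of vertices of G, and let u be any vertex of G. Then w_{(G,S)}(u) ≤ 3. -/
open Finset

section aux
variable {V : Type*} {G : SimpleGraph V} {S : Set V} {u v : V}

lemma sdist_le_length {p : G.Walk u v} (hp : ∀ x ∈ p.support, x ∈ S → x = v) :
    sdist G S u v ≤ (p.length : ℕ∞) :=
  iInf_le (fun q : {p : G.Walk u v // ∀ x ∈ p.support, x ∈ S → x = v} => ((q : G.Walk u v).length : ℕ∞)) ⟨p, hp⟩

lemma exists_walk_le (h : sdist G S u v ≠ ⊤) :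
    ∃ p : G.Walk u v, (∀ x ∈ p.support, x ∈ S → x = v) ∧ (p.length : ℕ∞) ≤ sdist G S u v := by
  have hlt : sdist G S u v < sdist G S u v + 1 := (ENat.lt_add_one_iff h).2 le_rfl
  rw [sdist] at hlt
  obtain ⟨⟨p, hp⟩, hlt⟩ := iInf_lt_iff.1 hlt
  exact ⟨p, hp, (ENat.lt_add_one_iff h).1 hlt⟩

lemma sdist_step [DecidableEq V] (hu : u ∉ S) (hvne : v ≠ u) (h : sdist G S u v ≠ ⊤) :
    ∃ u', G.Adj u u' ∧
      sdist (G.deleteEdges (G.incidenceSet u)) S u' v + 1 ≤ sdist G S u v := by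
  obtain ⟨p, hp, hlen⟩ := exists_walk_le h
  obtain ⟨u', hadj, q', hq⟩ := SimpleGraph.Walk.exists_eq_cons_of_ne hvne.symm p.bypass
  have hpath := p.bypass_isPath
  have hsupp := p.support_bypass_subset
  have hlq := p.length_bypass_le
  rw [hq] at hpath hsupp hlq
  rw [SimpleGraph.Walk.cons_isPath_iff] at hpath
  have hedges : ∀ e ∈ q'.edges, e ∈ (G.deleteEdges (G.incidenceSet u)).edgeSet := by
    intro e he
    rw [SimpleGraph.edgeSet_deleteEdges]
    refine ⟨SimpleGraph.Walk.edges_subset_edgeSet _ he, fun hinc => ?_⟩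
    obtain ⟨a, b⟩ := e
    rcases Sym2.mem_iff.1 hinc.2 with rfl | rfl
    · exact hpath.2 (q'.fst_mem_support_of_mem_edges he)
    · exact hpath.2 (q'.snd_mem_support_of_mem_edges he)
  have hval : ∀ x ∈ (q'.transfer _ hedges).support, x ∈ S → x = v := by
    intro x hx hxS
    rw [SimpleGraph.Walk.support_transfer] at hx
    exact hp x (hsupp (by rw [SimpleGraph.Walk.support_cons]; exact List.mem_cons_of_mem _ hx)) hxS
  have h1 : sdist (G.deleteEdges (G.incidenceSet u)) S u' v ≤ (q'.length : ℕ∞) := by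
    have := sdist_le_length hval
    rwa [SimpleGraph.Walk.length_transfer] at this
  refine ⟨u', hadj, ?_⟩
  calc sdist (G.deleteEdges (G.incidenceSet u)) S u' v + 1 ≤ (q'.length : ℕ∞) + 1 := by
        exact add_le_add_left h1 1
    _ = ((q'.length + 1 : ℕ) : ℕ∞) := by push_cast; ring
    _ ≤ ((p.length : ℕ) : ℕ∞) := by
        rw [SimpleGraph.Walk.length_cons] at hlq
        exact_mod_cast hlq
    _ ≤ sdist G S u v := hlen

end aux

lemma term_nonneg {V : Type*} (G : SimpleGraph V) (S : Finset V) (u v : V) :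
    0 ≤ (if sdist G (↑S) u v = ⊤ then (0:ℝ) else 2 * (1 / 2 : ℝ) ^ (sdist G (↑S) u v).toNat) := by
  split <;> positivity

lemma expWeight_main : ∀ (n : ℕ) {V : Type*} [Fintype V] (G : SimpleGraph V)
    [DecidableRel G.Adj], G.edgeFinset.card = n → (∀ v, G.degree v ≤ 3) →
    ∀ (S : Finset V) (u : V), expWeight G S u ≤ max 2 (G.degree u : ℝ) := by
  intro n
  induction n using Nat.strong_induction_on with
  | _ n ih =>
  intro V _ G _ hcard hdeg S u
  classical
  by_cases hu : u ∈ (S : Set V)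
  · have hz : ∀ v ∈ S, v ≠ u →
        (if sdist G (↑S) u v = ⊤ then (0:ℝ) else 2 * (1/2:ℝ) ^ (sdist G (↑S) u v).toNat) = 0 := by
      intro v hv hvu
      have he : IsEmpty {p : G.Walk u v // ∀ x ∈ p.support, x ∈ (↑S : Set V) → x = v} := by
        constructor; rintro ⟨p, hp⟩
        exact hvu (hp u p.start_mem_support hu).symm
      have : sdist G (↑S) u v = ⊤ := by rw [sdist, iInf_of_empty]
      simp [this]
    rw [expWeight, Finset.sum_eq_single_of_mem u (Finset.mem_coe.1 hu) hz]
    have h0 : sdist G (↑S) u u = 0 := by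
      refine le_antisymm ?_ zero_le
      have := sdist_le_length (S := (↑S : Set V))
        (p := (SimpleGraph.Walk.nil : G.Walk u u)) (by intro x hx _; simpa using hx)
      simpa using this
    rw [h0]
    norm_num
  · set G' := G.deleteEdges (G.incidenceSet u) with hG'def
    haveI : DecidableRel G'.Adj := Classical.decRel _
    have hG'le : G' ≤ G := SimpleGraph.deleteEdges_le _
    have hdeg' : ∀ v, G'.degree v ≤ 3 := by
      intro v
      refine le_trans (Finset.card_le_card ?_) (hdeg v)
      intro x hx
      rw [SimpleGraph.mem_neighborFinset] at hx ⊢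
      exact hG'le hx
    have hdegN : ∀ u', G.Adj u u' → G'.degree u' ≤ 2 := by
      intro u' hadj
      have hsub : G'.neighborFinset u' ⊆ (G.neighborFinset u').erase u := by
        intro x hx
        rw [SimpleGraph.mem_neighborFinset, hG'def, SimpleGraph.deleteEdges_adj] at hx
        rw [Finset.mem_erase, SimpleGraph.mem_neighborFinset]
        refine ⟨?_, hx.1⟩
        rintro rfl
        exact hx.2 (G.mk'_mem_incidenceSet_right_iff.2 hx.1)
      have := Finset.card_le_card hsub
      rw [Finset.card_erase_of_mem (by rw [SimpleGraph.mem_neighborFinset]; exact hadj.symm)] at this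
      have h3 := hdeg u'
      unfold SimpleGraph.degree at *
      omega
    have hcardlt : G.degree u ≠ 0 → G'.edgeFinset.card < n := by
      intro hne
      obtain ⟨u', hu'⟩ := Finset.card_ne_zero.1 (by rwa [SimpleGraph.degree] at hne)
      rw [SimpleGraph.mem_neighborFinset] at hu'
      refine hcard ▸ Finset.card_lt_card ((Finset.ssubset_iff_of_subset
        (SimpleGraph.edgeFinset_mono hG'le)).2 ⟨s(u, u'), ?_, ?_⟩)
      · rw [SimpleGraph.mem_edgeFinset, SimpleGraph.mem_edgeSet]; exact hu'
      · rw [SimpleGraph.mem_edgeFinset, hG'def, SimpleGraph.edgeSet_deleteEdges]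
        rintro ⟨-, hmem⟩
        exact hmem (G.mk'_mem_incidenceSet_left_iff.2 hu')
    have key : ∀ v ∈ S,
        (if sdist G (↑S) u v = ⊤ then (0:ℝ) else 2 * (1/2:ℝ) ^ (sdist G (↑S) u v).toNat)
        ≤ (1/2) * ∑ u' ∈ G.neighborFinset u,
            (if sdist G' (↑S) u' v = ⊤ then (0:ℝ) else 2 * (1/2:ℝ) ^ (sdist G' (↑S) u' v).toNat) := by
      intro v hv
      by_cases h : sdist G (↑S) u v = ⊤
      · rw [if_pos h]
        exact mul_nonneg (by norm_num)
          (Finset.sum_nonneg fun i _ => term_nonneg G' S i v)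
      · have hvu : v ≠ u := by rintro rfl; exact hu (Finset.mem_coe.2 hv)
        obtain ⟨u', hadj, hkey⟩ := sdist_step hu hvu h
        have hne' : sdist G' (↑S) u' v ≠ ⊤ := by
          intro ht
          rw [ht, top_add, top_le_iff] at hkey
          exact h hkey
        have hmk : (sdist G' (↑S) u' v).toNat + 1 ≤ (sdist G (↑S) u v).toNat := by
          rw [← ENat.coe_toNat hne', ← ENat.coe_toNat h] at hkey
          exact_mod_cast hkey
        have hsingle := Finset.single_le_sum
          (f := fun u' => (if sdist G' (↑S) u' v = ⊤ then (0:ℝ)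
            else 2 * (1/2:ℝ) ^ (sdist G' (↑S) u' v).toNat))
          (fun i _ => term_nonneg G' S i v)
          (show u' ∈ G.neighborFinset u by rw [SimpleGraph.mem_neighborFinset]; exact hadj)
        simp only [if_neg hne'] at hsingle
        rw [if_neg h]
        have hpow : (2:ℝ) * (1/2:ℝ) ^ (sdist G (↑S) u v).toNat
            ≤ (1/2) * (2 * (1/2:ℝ) ^ (sdist G' (↑S) u' v).toNat) := by
          have hp := pow_le_pow_of_le_one (by norm_num : (0:ℝ) ≤ 1/2)
            (by norm_num : (1/2:ℝ) ≤ 1) hmk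
          calc (2:ℝ) * (1/2:ℝ) ^ (sdist G (↑S) u v).toNat
              ≤ 2 * (1/2:ℝ) ^ ((sdist G' (↑S) u' v).toNat + 1) := by linarith
            _ = (1/2) * (2 * (1/2:ℝ) ^ (sdist G' (↑S) u' v).toNat) := by ring
        refine le_trans hpow ?_
        have h2 : (0:ℝ) ≤ 1/2 := by norm_num
        linarith [mul_le_mul_of_nonneg_left hsingle h2]
    by_cases hdu : G.degree u = 0
    · have : expWeight G S u ≤ ∑ v ∈ S, (0:ℝ) := by
        rw [expWeight]
        refine Finset.sum_le_sum fun v hv => ?_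
        have := key v hv
        rw [SimpleGraph.degree, Finset.card_eq_zero] at hdu
        simpa [hdu] using this
      simp only [Finset.sum_const_zero] at this
      exact le_trans this (by positivity)
    · calc expWeight G S u
          ≤ ∑ v ∈ S, (1/2) * ∑ u' ∈ G.neighborFinset u,
              (if sdist G' (↑S) u' v = ⊤ then (0:ℝ)
                else 2 * (1/2:ℝ) ^ (sdist G' (↑S) u' v).toNat) :=
            Finset.sum_le_sum key
        _ = (1/2) * ∑ u' ∈ G.neighborFinset u, expWeight G' S u' := by
            rw [← Finset.mul_sum, Finset.sum_comm]
            rfl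
        _ ≤ (1/2) * ∑ u' ∈ G.neighborFinset u, (2:ℝ) := by
            refine mul_le_mul_of_nonneg_left (Finset.sum_le_sum fun u' hu' => ?_) (by norm_num)
            have hadj : G.Adj u u' := by rwa [SimpleGraph.mem_neighborFinset] at hu'
            have := ih _ (hcardlt hdu) G' rfl hdeg' S u'
            refine le_trans this (max_le le_rfl ?_)
            have := hdegN u' hadj
            exact_mod_cast le_trans (Nat.cast_le.2 this) (by norm_num)
        _ = (G.degree u : ℝ) := by
            rw [Finset.sum_const, SimpleGraph.degree]
            simp [nsmul_eq_mul]
            ring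
        _ ≤ max 2 (G.degree u : ℝ) := le_max_right _ _


theorem stmt1 {V : Type*} [Fintype V] (G : SimpleGraph V) [DecidableRel G.Adj]
    (hG : ∀ v, G.degree v ≤ 3) (S : Finset V) (u : V) :
    expWeight G S u ≤ 3 := by
  refine le_trans (expWeight_main G.edgeFinset.card G rfl hG S u) (max_le (by norm_num) ?_)
  exact_mod_cast le_trans (Nat.cast_le.2 (hG u)) (by norm_num)
end

section
/- Let G be a graph of maximum degree at most 3 in which some vertex u has exactly two neighbors v_1 and v_2 that both have degree 1 in G. Then γ_e(G) = γ_e(G − v_2). -/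
open Finset

open SimpleGraph

section Aux

variable {V : Type*} [DecidableEq V] {G : SimpleGraph V} {u v₁ v₂ : V}

/-- The graph `G - v₂`. -/
abbrev delVert (G : SimpleGraph V) (v₂ : V) : SimpleGraph {v : V // v ≠ v₂} :=
  G.comap (Subtype.val : {v : V // v ≠ v₂} → V)

def valHom (G : SimpleGraph V) (v₂ : V) : delVert G v₂ →g G :=
  ⟨Subtype.val, fun h => h⟩

@[simp] lemma valHom_apply (a : {v : V // v ≠ v₂}) : valHom G v₂ a = a.val := rfl

variable (hA1 : ∀ b, G.Adj v₁ b ↔ b = u)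
variable (hAu : ∀ b, G.Adj u b ↔ b = v₁ ∨ b = v₂)
variable (hA2 : ∀ b, G.Adj v₂ b ↔ b = u)

section Conf
include hA1 hAu hA2

lemma adj_closed {a b : V} (hab : G.Adj a b) (ha : a = v₁ ∨ a = u ∨ a = v₂) :
    b = v₁ ∨ b = u ∨ b = v₂ := by
  rcases ha with rfl | rfl | rfl
  · have := (hA1 b).mp hab; tauto
  · have := (hAu b).mp hab; tauto
  · have := (hA2 b).mp hab; tauto

lemma adj_closed' {a b : V} (hab : G.Adj a b) (ha : ¬(a = v₁ ∨ a = u ∨ a = v₂)) :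
    ¬(b = v₁ ∨ b = u ∨ b = v₂) :=
  fun hb => ha (adj_closed hA1 hAu hA2 hab.symm hb)

lemma support_inC {x y : V} (p : G.Walk x y) (hx : x = v₁ ∨ x = u ∨ x = v₂) :
    ∀ z ∈ p.support, z = v₁ ∨ z = u ∨ z = v₂ := by
  induction p with
  | nil => intro z hz; rw [Walk.support_nil, List.mem_singleton] at hz; subst hz; exact hx
  | cons hadj p ih =>
      intro z hz
      rw [Walk.support_cons, List.mem_cons] at hz
      rcases hz with rfl | hz
      · exact hx
      · exact ih (adj_closed hA1 hAu hA2 hadj hx) z hz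

lemma support_notC {x y : V} (p : G.Walk x y) (hx : ¬(x = v₁ ∨ x = u ∨ x = v₂)) :
    ∀ z ∈ p.support, ¬(z = v₁ ∨ z = u ∨ z = v₂) := by
  induction p with
  | nil => intro z hz; rw [Walk.support_nil, List.mem_singleton] at hz; subst hz; exact hx
  | cons hadj p ih =>
      intro z hz
      rw [Walk.support_cons, List.mem_cons] at hz
      rcases hz with rfl | hz
      · exact hx
      · exact ih (adj_closed' hA1 hAu hA2 hadj hx) z hz

end Conf

lemma exists_lift {x y : V} (p : G.Walk x y) :
    ∀ (hx : x ≠ v₂) (hy : y ≠ v₂), (∀ z ∈ p.support, z ≠ v₂) →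
    ∃ q : (delVert G v₂).Walk ⟨x, hx⟩ ⟨y, hy⟩,
      q.length = p.length ∧ q.support.map Subtype.val = p.support := by
  induction p with
  | nil =>
      intro hx hy _
      exact ⟨Walk.nil, rfl, rfl⟩
  | @cons a b c hadj p ih =>
      intro hx hy h
      have hb : b ≠ v₂ := h b (by simp [Walk.support_cons])
      obtain ⟨q, hql, hqs⟩ := ih hb hy (fun z hz => h z (by simp [Walk.support_cons]; tauto))
      refine ⟨Walk.cons (by exact hadj : (delVert G v₂).Adj ⟨a, hx⟩ ⟨b, hb⟩) q, ?_, ?_⟩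
      · exact congrArg (· + 1) hql
      · show (⟨a, hx⟩ :: q.support).map Subtype.val = a :: p.support
        rw [List.map_cons, hqs]

lemma sdist_le {S : Set V} {x w : V} (p : G.Walk x w)
    (hp : ∀ z ∈ p.support, z ∈ S → z = w) :
    sdist G S x w ≤ (p.length : ℕ∞) :=
  iInf_le _ (⟨p, hp⟩ : {p : G.Walk x w // ∀ z ∈ p.support, z ∈ S → z = w})

lemma sdist_eq_top_of {S : Set V} {x w : V} (h : ∀ _ : G.Walk x w, False) :
    sdist G S x w = ⊤ := by
  haveI : IsEmpty {p : G.Walk x w // ∀ z ∈ p.support, z ∈ S → z = w} :=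
    ⟨fun p => h p.1⟩
  exact iInf_of_empty _

lemma term_nonneg_s3 {c : Prop} [Decidable c] {n : ℕ} :
    (0:ℝ) ≤ if c then 0 else 2 * (1/2:ℝ)^n := by
  split
  · norm_num
  · positivity

lemma term_ge_one {W : Type*} {H : SimpleGraph W} {S : Set W} {x w : W}
    (h : sdist H S x w ≤ 1) :
    (1:ℝ) ≤ if sdist H S x w = ⊤ then 0 else 2 * (1/2:ℝ)^(sdist H S x w).toNat := by
  have hne : sdist H S x w ≠ ⊤ := by
    intro ht; rw [ht] at h; exact (by simp : ¬ ((⊤:ℕ∞) ≤ 1)) h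
  rw [if_neg hne]
  have hn : (sdist H S x w).toNat ≤ 1 := by
    lift sdist H S x w to ℕ using hne with n hn
    exact_mod_cast h
  interval_cases h : (sdist H S x w).toNat <;> norm_num

section Transfer
include hA1 hAu hA2

lemma sdist_transfer (S : Finset V) (S' : Finset {v : V // v ≠ v₂})
    (hSS : ∀ z, ∀ hz : z ≠ v₂, ¬(z = v₁ ∨ z = u ∨ z = v₂) → (z ∈ S ↔ ⟨z, hz⟩ ∈ S'))
    {x w : V} (hx : ¬(x = v₁ ∨ x = u ∨ x = v₂)) (hw : ¬(w = v₁ ∨ w = u ∨ w = v₂))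
    (hx2 : x ≠ v₂) (hw2 : w ≠ v₂) :
    sdist G (↑S) x w = sdist (delVert G v₂) (↑S') ⟨x, hx2⟩ ⟨w, hw2⟩ := by
  apply le_antisymm
  · apply le_iInf
    rintro ⟨q, hq⟩
    have hlen : ((q.map (valHom G v₂)).length : ℕ∞) = (q.length : ℕ∞) := by
      rw [Walk.length_map]
    refine le_trans (sdist_le (q.map (valHom G v₂)) ?_) (le_of_eq hlen)
    intro z hz hzS
    rw [Walk.support_map] at hz
    obtain ⟨z', hz', rfl⟩ := List.mem_map.mp hz
    have hzc : ¬((z' : V) = v₁ ∨ (z' : V) = u ∨ (z' : V) = v₂) := by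
      refine support_notC hA1 hAu hA2 (q.map (valHom G v₂)) hx _ ?_
      rw [Walk.support_map]; exact List.mem_map_of_mem hz'
    have hz'S : z' ∈ S' := by
      have := (hSS (z' : V) z'.2 hzc).mp (by simpa using hzS)
      simpa using this
    have := hq z' hz' (by simpa using hz'S)
    exact congrArg Subtype.val this
  · apply le_iInf
    rintro ⟨p, hp⟩
    have hsupC := support_notC hA1 hAu hA2 p hx
    have hsup2 : ∀ z ∈ p.support, z ≠ v₂ := fun z hz e => hsupC z hz (Or.inr (Or.inr e))
    obtain ⟨q, hql, hqs⟩ := exists_lift p hx2 hw2 hsup2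
    refine le_trans (sdist_le q ?_) ?_
    · intro z' hz' hz'S
      have hzv : (z' : V) ∈ p.support := by
        rw [← hqs]; exact List.mem_map_of_mem hz'
      have hzc := hsupC _ hzv
      have hzS : (z' : V) ∈ S := (hSS _ z'.2 hzc).mpr (by simpa using hz'S)
      have := hp _ hzv (by simpa using hzS)
      exact Subtype.ext this
    · exact le_of_eq (by simp [hql])

lemma weight_transfer (S : Finset V) (S' : Finset {v : V // v ≠ v₂})
    (hSS : ∀ z, ∀ hz : z ≠ v₂, ¬(z = v₁ ∨ z = u ∨ z = v₂) → (z ∈ S ↔ ⟨z, hz⟩ ∈ S'))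
    {x : V} (hx : ¬(x = v₁ ∨ x = u ∨ x = v₂)) (hx2 : x ≠ v₂) :
    expWeight G S x = expWeight (delVert G v₂) S' ⟨x, hx2⟩ := by
  unfold expWeight
  rw [← Finset.sum_subset
      (Finset.filter_subset (fun z => ¬(z = v₁ ∨ z = u ∨ z = v₂)) S) ?h1,
    ← Finset.sum_subset
      (Finset.filter_subset (fun z : {v : V // v ≠ v₂} => ¬((z : V) = v₁ ∨ (z : V) = u)) S') ?h2]
  case h1 =>
    intro w hwS hwf
    rw [Finset.mem_filter, not_and] at hwf
    have hwc : w = v₁ ∨ w = u ∨ w = v₂ := by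
      by_contra hc; exact (hwf hwS) hc
    rw [if_pos]
    apply sdist_eq_top_of
    intro p
    exact support_notC hA1 hAu hA2 p hx w p.end_mem_support hwc
  case h2 =>
    intro w' hwS hwf
    rw [Finset.mem_filter, not_and] at hwf
    have hwc : (w' : V) = v₁ ∨ (w' : V) = u := by
      by_contra hc; exact (hwf hwS) hc
    rw [if_pos]
    apply sdist_eq_top_of
    intro q
    have hend : (w' : V) ∈ (q.map (valHom G v₂)).support :=
      (q.map (valHom G v₂)).end_mem_support
    exact support_notC hA1 hAu hA2 (q.map (valHom G v₂)) hx _ hend (by tauto)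
  · refine Finset.sum_bij' (fun w hw => ⟨w, ?_⟩) (fun w' _ => (w' : V)) ?_ ?_ ?_ ?_ ?_
    · rw [Finset.mem_filter] at hw
      exact fun e => hw.2 (Or.inr (Or.inr e))
    · intro w hw
      rw [Finset.mem_filter] at hw ⊢
      refine ⟨(hSS w _ hw.2).mp hw.1, ?_⟩
      intro hc
      exact hw.2 (by tauto)
    · intro w' hw'
      rw [Finset.mem_filter] at hw' ⊢
      have hwc : ¬((w' : V) = v₁ ∨ (w' : V) = u ∨ (w' : V) = v₂) := by
        have := w'.2; tauto
      refine ⟨(hSS (w' : V) w'.2 hwc).mpr (by simpa using hw'.1), hwc⟩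
    · intro w hw; rfl
    · intro w' hw'; rfl
    · intro w hw
      rw [Finset.mem_filter] at hw
      have hwc := hw.2
      have hw2 : w ≠ v₂ := fun e => hwc (Or.inr (Or.inr e))
      rw [sdist_transfer hA1 hAu hA2 S S' hSS hx hwc hx2 hw2]

end Transfer

section Main
include hA1 hAu hA2

lemma dir1 (hne : v₁ ≠ v₂) (hu1 : u ≠ v₁) (hu2 : u ≠ v₂)
    (S : Finset V) (hS : IsExpDomSet G S) :
    ∃ S' : Finset {v : V // v ≠ v₂}, IsExpDomSet (delVert G v₂) S' ∧ S'.card ≤ S.card := by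
  classical
  set Sout := S.filter (fun z => ¬(z = v₁ ∨ z = u ∨ z = v₂)) with hSout
  set S' : Finset {v : V // v ≠ v₂} := insert ⟨u, hu2⟩ (Sout.subtype (· ≠ v₂)) with hS'
  have hSS : ∀ z, ∀ hz : z ≠ v₂, ¬(z = v₁ ∨ z = u ∨ z = v₂) → (z ∈ S ↔ ⟨z, hz⟩ ∈ S') := by
    intro z hz hnc
    constructor
    · intro hzS
      exact Finset.mem_insert_of_mem (Finset.mem_subtype.mpr (Finset.mem_filter.mpr ⟨hzS, hnc⟩))
    · intro hzS'
      rcases Finset.mem_insert.mp hzS' with he | hm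
      · exact absurd (congrArg Subtype.val he) (fun e => hnc (Or.inr (Or.inl e)))
      · exact (Finset.mem_filter.mp (Finset.mem_subtype.mp hm)).1
  refine ⟨S', ?_, ?_⟩
  · rintro ⟨x, hx2⟩ hx'
    by_cases hxc : x = v₁ ∨ x = u ∨ x = v₂
    · rcases hxc with he | he | he
      · -- x = v₁ : use u at distance 1
        have hax : G.Adj x u := by rw [he]; exact (hA1 u).mpr rfl
        have hadj : (delVert G v₂).Adj ⟨x, hx2⟩ ⟨u, hu2⟩ := hax
        have hle : sdist (delVert G v₂) (↑S') ⟨x, hx2⟩ ⟨u, hu2⟩ ≤ 1 := by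
          refine le_trans (sdist_le (Walk.cons hadj Walk.nil) ?_) (by norm_num)
          intro z hz hzS
          simp only [Walk.support_cons, Walk.support_nil, List.mem_cons,
            List.mem_singleton] at hz
          rcases hz with rfl | rfl | h
          · exact absurd hzS hx'
          · rfl
          · exact absurd h List.not_mem_nil
        unfold expWeight
        refine le_trans (term_ge_one hle)
          (Finset.single_le_sum
            (f := fun w => if sdist (delVert G v₂) (↑S') (⟨x, hx2⟩ : {v : V // v ≠ v₂}) w = ⊤
              then (0:ℝ)
              else 2 * (1/2:ℝ) ^ (sdist (delVert G v₂) (↑S') ⟨x, hx2⟩ w).toNat)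
            (fun i _ => term_nonneg_s3) (Finset.mem_insert_self _ _))
      · refine absurd ?_ hx'
        have he' : (⟨x, hx2⟩ : {v : V // v ≠ v₂}) = ⟨u, hu2⟩ := Subtype.ext he
        rw [he']
        exact Finset.mem_insert_self _ _
      · exact absurd he hx2
    · have hxS : x ∉ S := fun h => hx' ((hSS x hx2 hxc).mp h)
      calc (1:ℝ) ≤ expWeight G S x := hS x hxS
        _ = expWeight (delVert G v₂) S' ⟨x, hx2⟩ :=
            weight_transfer hA1 hAu hA2 S S' hSS hxc hx2
  · have hcap : ∃ c ∈ S, (c = v₁ ∨ c = u ∨ c = v₂) := by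
      by_contra h
      push_neg at h
      have hv₁ : v₁ ∉ S := fun hv => (h v₁ hv).1 rfl
      have h1 := hS v₁ hv₁
      have hz : expWeight G S v₁ = 0 := by
        unfold expWeight
        apply Finset.sum_eq_zero
        intro w hw
        rw [if_pos]
        apply sdist_eq_top_of
        intro p
        have hcc := support_inC hA1 hAu hA2 p (Or.inl rfl) w p.end_mem_support
        have := h w hw
        tauto
      rw [hz] at h1
      norm_num at h1
    obtain ⟨c, hcS, hcC⟩ := hcap
    have h1 : (S.filter (fun z => (z = v₁ ∨ z = u ∨ z = v₂))).card + Sout.card = S.card := by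
      rw [hSout]
      exact Finset.card_filter_add_card_filter_not _
    have h2 : 1 ≤ (S.filter (fun z => (z = v₁ ∨ z = u ∨ z = v₂))).card :=
      Finset.card_pos.mpr ⟨c, Finset.mem_filter.mpr ⟨hcS, hcC⟩⟩
    have h3 : S'.card ≤ (Sout.subtype (· ≠ v₂)).card + 1 := Finset.card_insert_le _ _
    have h4 : (Sout.subtype (· ≠ v₂)).card ≤ Sout.card := by
      rw [Finset.card_subtype]
      exact Finset.card_filter_le _ _
    omega

lemma dir2 (hne : v₁ ≠ v₂) (hu1 : u ≠ v₁) (hu2 : u ≠ v₂)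
    (S' : Finset {v : V // v ≠ v₂}) (hS : IsExpDomSet (delVert G v₂) S') :
    ∃ S : Finset V, IsExpDomSet G S ∧ S.card ≤ S'.card := by
  classical
  set Sout := S'.filter (fun z : {v : V // v ≠ v₂} => ¬((z : V) = v₁ ∨ (z : V) = u)) with hSout
  set S : Finset V := insert u (Sout.image Subtype.val) with hSdef
  have hSS : ∀ z, ∀ hz : z ≠ v₂, ¬(z = v₁ ∨ z = u ∨ z = v₂) → (z ∈ S ↔ ⟨z, hz⟩ ∈ S') := by
    intro z hz hnc
    constructor
    · intro hzS
      rcases Finset.mem_insert.mp hzS with rfl | hm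
      · exact absurd (Or.inr (Or.inl rfl)) hnc
      · obtain ⟨w, hw, hwv⟩ := Finset.mem_image.mp hm
        have : w = ⟨z, hz⟩ := Subtype.ext hwv
        rw [← this]
        exact (Finset.mem_filter.mp hw).1
    · intro hzS'
      refine Finset.mem_insert_of_mem (Finset.mem_image.mpr ⟨⟨z, hz⟩, ?_, rfl⟩)
      refine Finset.mem_filter.mpr ⟨hzS', ?_⟩
      intro hc
      exact hnc (by tauto)
  refine ⟨S, ?_, ?_⟩
  · intro x hx
    by_cases hxc : x = v₁ ∨ x = u ∨ x = v₂
    · have huS : u ∈ S := Finset.mem_insert_self _ _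
      have hxu : x ≠ u := fun e => hx (e ▸ huS)
      have hadj : G.Adj x u := by
        rcases hxc with he | he | he
        · rw [he]; exact (hA1 u).mpr rfl
        · exact absurd he hxu
        · rw [he]; exact (hA2 u).mpr rfl
      have hle : sdist G (↑S) x u ≤ 1 := by
        refine le_trans (sdist_le (Walk.cons hadj Walk.nil) ?_) (by norm_num)
        intro z hz hzS
        simp only [Walk.support_cons, Walk.support_nil, List.mem_cons,
          List.mem_singleton] at hz
        rcases hz with rfl | rfl | h
        · exact absurd hzS hx
        · rfl
        · exact absurd h List.not_mem_nil
      unfold expWeight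
      exact le_trans (term_ge_one hle)
        (Finset.single_le_sum
          (f := fun w => if sdist G (↑S) x w = ⊤ then (0:ℝ)
            else 2 * (1/2:ℝ) ^ (sdist G (↑S) x w).toNat)
          (fun i _ => term_nonneg_s3) huS)
    · have hx2 : x ≠ v₂ := fun e => hxc (Or.inr (Or.inr e))
      have hxS' : (⟨x, hx2⟩ : {v : V // v ≠ v₂}) ∉ S' := fun h => hx ((hSS x hx2 hxc).mpr h)
      calc (1:ℝ) ≤ expWeight (delVert G v₂) S' ⟨x, hx2⟩ := hS _ hxS'
        _ = expWeight G S x := (weight_transfer hA1 hAu hA2 S S' hSS hxc hx2).symm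
  · have hcap : ∃ c' ∈ S', ((c' : {v : V // v ≠ v₂}) : V) = v₁ ∨ ((c' : {v : V // v ≠ v₂}) : V) = u := by
      by_contra h
      push_neg at h
      have hv₁ : (⟨v₁, hne⟩ : {v : V // v ≠ v₂}) ∉ S' := by
        intro hv
        rcases h _ hv with ⟨ha, _⟩
        exact ha rfl
      have h1 := hS _ hv₁
      have hz : expWeight (delVert G v₂) S' ⟨v₁, hne⟩ = 0 := by
        unfold expWeight
        apply Finset.sum_eq_zero
        intro w hw
        rw [if_pos]
        apply sdist_eq_top_of
        intro q
        have hend : ((w : V) : V) ∈ (q.map (valHom G v₂)).support :=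
          (q.map (valHom G v₂)).end_mem_support
        have := support_inC hA1 hAu hA2 (q.map (valHom G v₂)) (Or.inl rfl) _ hend
        rcases this with e | e | e
        · exact (h w hw).1 e
        · exact (h w hw).2 e
        · exact w.2 e
      rw [hz] at h1
      norm_num at h1
    obtain ⟨c, hcS, hcC⟩ := hcap
    have h1 : (S'.filter (fun z : {v : V // v ≠ v₂} => ((z : V) = v₁ ∨ (z : V) = u))).card
        + Sout.card = S'.card := by
      rw [hSout]
      exact Finset.card_filter_add_card_filter_not _
    have h2 : 1 ≤ (S'.filter (fun z : {v : V // v ≠ v₂} => ((z : V) = v₁ ∨ (z : V) = u))).card :=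
      Finset.card_pos.mpr ⟨c, Finset.mem_filter.mpr ⟨hcS, hcC⟩⟩
    have h3 : S.card ≤ (Sout.image Subtype.val).card + 1 := Finset.card_insert_le _ _
    have h4 : (Sout.image Subtype.val).card ≤ Sout.card := Finset.card_image_le
    omega

end Main

end Aux

theorem stmt3 {V : Type*} [Fintype V] [DecidableEq V] (G : SimpleGraph V) [DecidableRel G.Adj]
    (hG : ∀ v, G.degree v ≤ 3) (u v₁ v₂ : V) (hne : v₁ ≠ v₂)
    (hN : G.neighborFinset u = {v₁, v₂})
    (h1 : G.degree v₁ = 1) (h2 : G.degree v₂ = 1) :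
    expDomNum V G = expDomNum {v : V // v ≠ v₂} (G.comap (Subtype.val : {v : V // v ≠ v₂} → V)) := by
  classical
  have hAu : ∀ b, G.Adj u b ↔ b = v₁ ∨ b = v₂ := by
    intro b
    rw [← SimpleGraph.mem_neighborFinset, hN]
    simp
  have hadj_uv₁ : G.Adj u v₁ := (hAu v₁).mpr (Or.inl rfl)
  have hadj_uv₂ : G.Adj u v₂ := (hAu v₂).mpr (Or.inr rfl)
  have hu1 : u ≠ v₁ := G.ne_of_adj hadj_uv₁
  have hu2 : u ≠ v₂ := G.ne_of_adj hadj_uv₂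
  have hN1 : G.neighborFinset v₁ = {u} := by
    have hcard : (G.neighborFinset v₁).card = 1 := h1
    obtain ⟨a, ha⟩ := Finset.card_eq_one.mp hcard
    have hu : u ∈ G.neighborFinset v₁ :=
      (SimpleGraph.mem_neighborFinset G v₁ u).mpr hadj_uv₁.symm
    rw [ha] at hu ⊢
    rw [Finset.mem_singleton] at hu
    rw [hu]
  have hN2 : G.neighborFinset v₂ = {u} := by
    have hcard : (G.neighborFinset v₂).card = 1 := h2
    obtain ⟨a, ha⟩ := Finset.card_eq_one.mp hcard
    have hu : u ∈ G.neighborFinset v₂ :=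
      (SimpleGraph.mem_neighborFinset G v₂ u).mpr hadj_uv₂.symm
    rw [ha] at hu ⊢
    rw [Finset.mem_singleton] at hu
    rw [hu]
  have hA1 : ∀ b, G.Adj v₁ b ↔ b = u := by
    intro b
    rw [← SimpleGraph.mem_neighborFinset, hN1, Finset.mem_singleton]
  have hA2 : ∀ b, G.Adj v₂ b ↔ b = u := by
    intro b
    rw [← SimpleGraph.mem_neighborFinset, hN2, Finset.mem_singleton]
  have hne1 : {k | ∃ S : Finset V, IsExpDomSet G S ∧ S.card = k}.Nonempty :=
    ⟨_, Finset.univ, fun w hw => absurd (Finset.mem_univ w) hw, rfl⟩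
  have hne2 : {k | ∃ S' : Finset {v : V // v ≠ v₂},
      IsExpDomSet (G.comap (Subtype.val : {v : V // v ≠ v₂} → V)) S' ∧ S'.card = k}.Nonempty :=
    ⟨_, Finset.univ, fun w hw => absurd (Finset.mem_univ w) hw, rfl⟩
  apply le_antisymm
  · obtain ⟨S', hS', hcard⟩ := Nat.sInf_mem hne2
    obtain ⟨S, hS, hle⟩ := dir2 hA1 hAu hA2 hne hu1 hu2 S' hS'
    calc expDomNum V G ≤ S.card := Nat.sInf_le ⟨S, hS, rfl⟩
      _ ≤ S'.card := hle
      _ = _ := hcard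
  · obtain ⟨S, hS, hcard⟩ := Nat.sInf_mem hne1
    obtain ⟨S', hS', hle⟩ := dir1 hA1 hAu hA2 hne hu1 hu2 S hS
    calc expDomNum {v : V // v ≠ v₂} (G.comap (Subtype.val : {v : V // v ≠ v₂} → V))
        ≤ S'.card := Nat.sInf_le ⟨S', hS', rfl⟩
      _ ≤ S.card := hle
      _ = _ := hcard
end

section
/- If T is a tree of maximum degree at most 3, then γ_e(T) ≥ (n(T) + 2)/6, where n(T) is the order of T. -/
open Finset
open SimpleGraph

namespace ExpAux
variable {V : Type*} {T : SimpleGraph V}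
attribute [local instance] Classical.propDecidable Classical.decEq

noncomputable def pth (hconn : T.Connected) (u w : V) : T.Walk u w :=
  ((hconn.preconnected u w).some.toPath : T.Path u w).1

lemma pth_isPath (hconn : T.Connected) (u w : V) : (pth hconn u w).IsPath :=
  ((hconn.preconnected u w).some.toPath).2

lemma pth_eq (hconn : T.Connected) (hacyc : T.IsAcyclic) {u w : V}
    (q : T.Walk u w) (hq : q.IsPath) : q = pth hconn u w := by
  have := hacyc.path_unique ⟨q, hq⟩ ((hconn.preconnected u w).some.toPath)
  exact congrArg Subtype.val this

variable (hconn : T.Connected) (hacyc : T.IsAcyclic)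
include hconn hacyc

section Fixed
variable (S : Set V) (v : V)

/-- validity of the unique path from `u` to `v` -/
def valp (u : V) : Prop := ∀ x ∈ (pth hconn u v).support, x ∈ S → x = v

lemma sdist_eq (u : V) :
    sdist T S u v = if valp hconn S v u then ((pth hconn u v).length : ℕ∞) else ⊤ := by
  split_ifs with h
  · refine le_antisymm (iInf_le (fun p : {p : T.Walk u v // ∀ x ∈ p.support, x ∈ S → x = v} =>
      ((p : T.Walk u v).length : ℕ∞)) ⟨pth hconn u v, h⟩) ?_
    refine le_iInf fun q => ?_
    have h1 : (q : T.Walk u v).bypass = pth hconn u v :=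
      pth_eq hconn hacyc _ (q : T.Walk u v).bypass_isPath
    have := (q : T.Walk u v).length_bypass_le
    rw [h1] at this
    exact_mod_cast this
  · rw [sdist]
    haveI : IsEmpty {p : T.Walk u v // ∀ x ∈ p.support, x ∈ S → x = v} := by
      constructor
      rintro ⟨q, hq⟩
      refine h fun x hx hxS => hq x ?_ hxS
      have h1 : q.bypass = pth hconn u v := pth_eq hconn hacyc _ q.bypass_isPath
      rw [← h1] at hx
      exact q.support_bypass_subset hx
    exact iInf_of_empty _

end Fixed

section Par
variable (v : V)

lemma exists_decomp (u : V) (huv : u ≠ v) :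
    ∃ (x : V) (h : T.Adj u x), pth hconn u v = Walk.cons h (pth hconn x v) := by
  have hp := pth_isPath hconn u v
  have hnil : ¬ (pth hconn u v).Nil := Walk.not_nil_of_ne huv
  obtain ⟨x, h, q, hq⟩ := Walk.not_nil_iff.mp hnil
  have hqp : q.IsPath := by rw [hq] at hp; exact hp.of_cons
  exact ⟨x, h, by rw [hq, pth_eq hconn hacyc q hqp]⟩

noncomputable def par (u : V) : V :=
  if h : u = v then v else (exists_decomp hconn hacyc v u h).choose

lemma par_spec {u : V} (huv : u ≠ v) :
    ∃ h : T.Adj u (par hconn hacyc v u),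
      pth hconn u v = Walk.cons h (pth hconn (par hconn hacyc v u) v) := by
  rw [par, dif_neg huv]
  exact (exists_decomp hconn hacyc v u huv).choose_spec

lemma adj_par {u : V} (huv : u ≠ v) : T.Adj u (par hconn hacyc v u) :=
  (par_spec hconn hacyc v huv).choose

lemma support_par {u : V} (huv : u ≠ v) :
    (pth hconn u v).support = u :: (pth hconn (par hconn hacyc v u) v).support := by
  obtain ⟨h, hd⟩ := par_spec hconn hacyc v huv
  rw [hd, Walk.support_cons]

lemma length_par {u : V} (huv : u ≠ v) :
    (pth hconn u v).length = (pth hconn (par hconn hacyc v u) v).length + 1 := by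
  obtain ⟨h, hd⟩ := par_spec hconn hacyc v huv
  rw [hd, Walk.length_cons]

lemma par_eq_of_cons {u x : V} (huv : u ≠ v) (h : T.Adj u x)
    (hd : pth hconn u v = Walk.cons h (pth hconn x v)) : par hconn hacyc v u = x := by
  obtain ⟨h', hd'⟩ := par_spec hconn hacyc v huv
  have := congrArg (fun w => Walk.getVert w 1) (hd'.symm.trans hd)
  simpa [Walk.getVert_cons_succ (n := 0)] using this

lemma par_eq_of_mem {a b : V} (hab : T.Adj a b) (hb : b ∈ (pth hconn a v).support) :
    par hconn hacyc v a = b := by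
  have hav : a ≠ v := by
    rintro rfl
    -- then pth a v is nil-like; b in support of a path from a to a means b = a, contradict adj
    have : pth hconn a a = Walk.nil := by
      have := pth_isPath hconn a a
      rwa [Walk.isPath_iff_eq_nil] at this
    rw [this] at hb
    simp at hb
    exact hab.ne hb.symm
  have hp := pth_isPath hconn a v
  set p := pth hconn a v with hpdef
  have htake : p.takeUntil b hb = Walk.cons hab Walk.nil := by
    have h1 : (p.takeUntil b hb).IsPath := hp.takeUntil hb
    have h2 : (Walk.cons hab Walk.nil : T.Walk a b).IsPath := by
      simp [Walk.cons_isPath_iff, hab.ne]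
    rw [pth_eq hconn hacyc _ h1, pth_eq hconn hacyc _ h2]
  have hdrop : p.dropUntil b hb = pth hconn b v :=
    pth_eq hconn hacyc _ (hp.dropUntil hb)
  have hspec := p.take_spec hb
  rw [htake, hdrop] at hspec
  simp only [Walk.cons_append, Walk.nil_append] at hspec
  exact par_eq_of_cons hconn hacyc v hav hab hspec.symm

lemma par_eq_of_adj_v {a : V} (hab : T.Adj a v) : par hconn hacyc v a = v :=
  par_eq_of_mem hconn hacyc v hab (Walk.end_mem_support _)

lemma adj_dichotomy {a b : V} (hab : T.Adj a b) :
    par hconn hacyc v a = b ∨ par hconn hacyc v b = a := by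
  by_cases hb : b ∈ (pth hconn a v).support
  · exact Or.inl (par_eq_of_mem hconn hacyc v hab hb)
  · right
    have hp : (Walk.cons hab.symm (pth hconn a v)).IsPath := by
      rw [Walk.cons_isPath_iff]
      exact ⟨pth_isPath hconn a v, hb⟩
    have hbv : b ≠ v := by
      rintro rfl
      exact hb (Walk.end_mem_support _)
    exact par_eq_of_cons hconn hacyc v hbv hab.symm
      (pth_eq hconn hacyc _ hp).symm

lemma pth_adj_v {a : V} (hab : T.Adj a v) :
    pth hconn a v = Walk.cons hab Walk.nil := by
  refine (pth_eq hconn hacyc _ ?_).symm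
  simp [Walk.cons_isPath_iff, hab.ne]

end Par
section Weight
variable (S : Set V) (v : V)

noncomputable def fw (u : V) : ℝ :=
  if valp hconn S v u then ((1:ℝ)/2)^(pth hconn u v).length else 0

lemma fw_nonneg (u : V) : 0 ≤ fw hconn S v u := by
  rw [fw]; split_ifs <;> positivity

lemma valp_iff_par {u : V} (hu : u ∉ S) (huv : u ≠ v) :
    valp hconn S v u ↔ valp hconn S v (par hconn hacyc v u) := by
  constructor
  · intro h x hx hxS
    refine h x ?_ hxS
    rw [support_par hconn hacyc v huv]
    exact List.mem_cons_of_mem _ hx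
  · intro h x hx hxS
    rw [support_par hconn hacyc v huv] at hx
    rcases List.mem_cons.mp hx with rfl | hx
    · exact absurd hxS hu
    · exact h x hx hxS

lemma fw_par {u : V} (hu : u ∉ S) (huv : u ≠ v) :
    fw hconn S v (par hconn hacyc v u) = 2 * fw hconn S v u := by
  by_cases h : valp hconn S v u
  · have h2 : valp hconn S v (par hconn hacyc v u) :=
      (valp_iff_par hconn hacyc S v hu huv).mp h
    rw [fw, fw, if_pos h, if_pos h2, length_par hconn hacyc v huv]
    ring
  · have h2 : ¬ valp hconn S v (par hconn hacyc v u) :=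
      fun hh => h ((valp_iff_par hconn hacyc S v hu huv).mpr hh)
    rw [fw, fw, if_neg h, if_neg h2]
    ring

lemma fw_adj_v {a : V} (ha : a ∉ S) (hab : T.Adj a v) :
    fw hconn S v a = 1/2 := by
  have hp := pth_adj_v hconn hacyc v hab
  have hval : valp hconn S v a := by
    intro x hx hxS
    rw [hp] at hx
    have hx' : x = a ∨ x = v := by simpa using hx
    rcases hx' with rfl | rfl
    · exact absurd hxS ha
    · rfl
  rw [fw, if_pos hval, hp]
  norm_num

lemma fw_zero {a : V} (hav : a ≠ v) (hpar : par hconn hacyc v a ∈ S)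
    (hnadj : ¬ T.Adj a v) : fw hconn S v a = 0 := by
  rw [fw, if_neg]
  intro hval
  have hmem : par hconn hacyc v a ∈ (pth hconn a v).support := by
    rw [support_par hconn hacyc v hav]
    exact List.mem_cons_of_mem _ (Walk.start_mem_support _)
  have h2 := hval _ hmem hpar
  exact hnadj (h2 ▸ adj_par hconn hacyc v hav)

lemma summand_eq (u : V) [Decidable (sdist T S u v = ⊤)] :
    (if sdist T S u v = ⊤ then (0:ℝ) else 2 * (1/2:ℝ)^(sdist T S u v).toNat)
      = 2 * fw hconn S v u := by
  by_cases h : valp hconn S v u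
  · rw [if_neg, fw, if_pos h]
    · rw [sdist_eq hconn hacyc S v u, if_pos h]
      simp
    · rw [sdist_eq hconn hacyc S v u, if_pos h]
      exact_mod_cast ENat.coe_ne_top _
  · rw [if_pos, fw, if_neg h]
    · ring
    · rw [sdist_eq hconn hacyc S v u, if_neg h]

end Weight

section Sums
variable [Fintype V] (S : Finset V) (v : V)

omit hconn hacyc in
lemma filter_adj_eq [DecidableRel T.Adj] (u : V) :
    Sᶜ.filter (fun b => T.Adj u b) = T.neighborFinset u \ S := by
  ext b
  simp only [mem_filter, mem_compl, mem_sdiff, mem_neighborFinset]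
  tauto

lemma perv [DecidableRel T.Adj] (hv : v ∈ S) :
    ∑ u ∈ Sᶜ, (((T.neighborFinset u \ S).card : ℝ)) * fw hconn (↑S) v u
      = 3 * ∑ u ∈ Sᶜ, fw hconn (↑S) v u
        - (3/2) * ((T.neighborFinset v \ S).card : ℝ) := by
  classical
  set F := fw hconn (↑S : Set V) v with hF
  set Pr : Finset (V × V) := (Sᶜ ×ˢ Sᶜ).filter (fun p => T.Adj p.1 p.2) with hPr
  have hne : ∀ a ∈ Sᶜ, a ≠ v := by
    intro a ha h
    exact (mem_compl.mp ha) (h ▸ hv)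
  have hnotS : ∀ a ∈ Sᶜ, a ∉ (↑S : Set V) := fun a ha => by
    simpa using (mem_compl.mp ha)
  -- step 1 : pair sum
  have step1 : ∑ p ∈ Pr, F p.1 = ∑ u ∈ Sᶜ, ((T.neighborFinset u \ S).card : ℝ) * F u := by
    rw [hPr, Finset.sum_filter, Finset.sum_product]
    refine Finset.sum_congr rfl fun u hu => ?_
    show ∑ b ∈ Sᶜ, (if T.Adj u b then F u else 0) = _
    rw [← Finset.sum_filter, Finset.sum_const, filter_adj_eq, nsmul_eq_mul]
  -- split by parent predicate
  have hsplit := Finset.sum_filter_add_sum_filter_not Pr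
    (fun p => p.2 = par hconn hacyc v p.1) (fun p => F p.1)
  -- members of Pr
  have hmemPr : ∀ p ∈ Pr, p.1 ∈ Sᶜ ∧ p.2 ∈ Sᶜ ∧ T.Adj p.1 p.2 := by
    intro p hp
    rw [hPr, mem_filter, Finset.mem_product] at hp
    exact ⟨hp.1.1, hp.1.2, hp.2⟩
  -- step 3 : the not-parent part equals sum of F p.2 over parent part
  have step3 : ∑ p ∈ Pr.filter (fun p => ¬ p.2 = par hconn hacyc v p.1), F p.1
      = ∑ p ∈ Pr.filter (fun p => p.2 = par hconn hacyc v p.1), F p.2 := by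
    refine Finset.sum_nbij' (fun p => Prod.swap p) (fun p => Prod.swap p) ?_ ?_ ?_ ?_ ?_
    · intro p hp
      rw [mem_filter] at hp ⊢
      obtain ⟨h1, h2, h3⟩ := hmemPr p hp.1
      have hdich := adj_dichotomy hconn hacyc v h3
      have hpar : par hconn hacyc v p.2 = p.1 := hdich.resolve_left (fun h => hp.2 h.symm)
      constructor
      · rw [hPr, mem_filter, Finset.mem_product]
        exact ⟨⟨h2, h1⟩, h3.symm⟩
      · exact hpar.symm
    · intro p hp
      rw [mem_filter] at hp ⊢
      obtain ⟨h1, h2, h3⟩ := hmemPr p hp.1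
      constructor
      · rw [hPr, mem_filter, Finset.mem_product]
        exact ⟨⟨h2, h1⟩, h3.symm⟩
      · -- need : ¬ p.1 = par v p.2
        intro hcon
        replace hcon : p.1 = par hconn hacyc v p.2 := hcon
        have e1 := length_par hconn hacyc v (hne _ h1)
        have e2 := length_par hconn hacyc v (hne _ h2)
        rw [← hp.2] at e1
        rw [← hcon] at e2
        omega
    · intro p _; exact Prod.swap_swap p
    · intro p _; exact Prod.swap_swap p
    · intro p _; rfl
  -- step 4 : combine on parent part
  have step4 : ∑ p ∈ Pr.filter (fun p => p.2 = par hconn hacyc v p.1), (F p.1 + F p.2)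
      = ∑ p ∈ Pr.filter (fun p => p.2 = par hconn hacyc v p.1), 3 * F p.1 := by
    refine Finset.sum_congr rfl fun p hp => ?_
    rw [mem_filter] at hp
    obtain ⟨h1, h2, h3⟩ := hmemPr p hp.1
    have : F p.2 = 2 * F p.1 := by
      rw [hp.2, hF]
      exact fw_par hconn hacyc (↑S) v (hnotS _ h1) (hne _ h1)
    rw [this]; ring
  -- step 5 : parent part indexed by first coordinate
  have step5 : ∑ p ∈ Pr.filter (fun p => p.2 = par hconn hacyc v p.1), F p.1
      = ∑ a ∈ Sᶜ.filter (fun a => par hconn hacyc v a ∉ S), F a := by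
    refine Finset.sum_nbij' (fun p => p.1) (fun a => (a, par hconn hacyc v a)) ?_ ?_ ?_ ?_ ?_
    · intro p hp
      rw [mem_filter] at hp ⊢
      obtain ⟨h1, h2, h3⟩ := hmemPr p hp.1
      exact ⟨h1, by rw [← hp.2]; exact mem_compl.mp h2⟩
    · intro a ha
      rw [mem_filter] at ha ⊢
      refine ⟨?_, rfl⟩
      rw [hPr, mem_filter, Finset.mem_product]
      exact ⟨⟨ha.1, mem_compl.mpr ha.2⟩, adj_par hconn hacyc v (hne _ ha.1)⟩
    · intro p hp
      rw [mem_filter] at hp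
      exact Prod.ext rfl hp.2.symm
    · intro a _; rfl
    · intro p _; rfl
  -- step 7 : boundary part
  have step7 : ∑ a ∈ Sᶜ.filter (fun a => par hconn hacyc v a ∈ S), F a
      = (1/2) * ((T.neighborFinset v \ S).card : ℝ) := by
    rw [Finset.sum_filter]
    have : ∀ a ∈ Sᶜ, (if par hconn hacyc v a ∈ S then F a else 0)
        = (if T.Adj v a then (1/2 : ℝ) else 0) := by
      intro a ha
      by_cases hadj : T.Adj a v
      · have hpv : par hconn hacyc v a = v := par_eq_of_adj_v hconn hacyc v hadj
        rw [hpv, if_pos hv, if_pos hadj.symm, hF,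
          fw_adj_v hconn hacyc (↑S) v (hnotS _ ha) hadj]
      · rw [if_neg (fun h : T.Adj v a => hadj h.symm)]
        by_cases hpar : par hconn hacyc v a ∈ S
        · rw [if_pos hpar, hF,
            fw_zero hconn hacyc (↑S) v (hne _ ha) (by simpa using hpar) hadj]
        · rw [if_neg hpar]
    rw [Finset.sum_congr rfl this, ← Finset.sum_filter, Finset.sum_const, filter_adj_eq,
      nsmul_eq_mul]
    ring
  -- step 6 : split Sᶜ by parent membership
  have step6 := Finset.sum_filter_add_sum_filter_not Sᶜ
    (fun a => par hconn hacyc v a ∉ S) F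
  have hnotnot : Sᶜ.filter (fun a => ¬ par hconn hacyc v a ∉ S)
      = Sᶜ.filter (fun a => par hconn hacyc v a ∈ S) := by
    refine Finset.filter_congr fun a _ => ?_
    simp
  rw [hnotnot, step7] at step6
  -- assemble
  have hadd : ∑ p ∈ Pr.filter (fun p => p.2 = par hconn hacyc v p.1), (F p.1 + F p.2)
      = (∑ p ∈ Pr.filter (fun p => p.2 = par hconn hacyc v p.1), F p.1)
        + ∑ p ∈ Pr.filter (fun p => p.2 = par hconn hacyc v p.1), F p.2 :=
    Finset.sum_add_distrib
  have hmul : ∑ p ∈ Pr.filter (fun p => p.2 = par hconn hacyc v p.1), 3 * F p.1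
      = 3 * ∑ p ∈ Pr.filter (fun p => p.2 = par hconn hacyc v p.1), F p.1 :=
    (Finset.mul_sum _ _ _).symm
  linarith [hsplit, step1, step3, step4, step5, step6, hadd, hmul]
end Sums

section Global
variable [Fintype V] [DecidableRel T.Adj]

lemma main_bound (hT : ∀ w, T.degree w ≤ 3) (S : Finset V) (hS : IsExpDomSet T S) :
    (Fintype.card V : ℝ) + 2 ≤ 6 * (S.card : ℝ) := by
  classical
  haveI : Nonempty V := hconn.nonempty
  set n := Fintype.card V with hn
  set k := S.card with hk
  have hkn : k ≤ n := Finset.card_le_univ S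
  have hn1 : 1 ≤ n := Fintype.card_pos
  -- notation
  set c : V → ℕ := fun u => (T.neighborFinset u \ S).card with hc
  set m : V → ℕ := fun u => (T.neighborFinset u ∩ S).card with hm
  -- (1) handshake on the tree
  have htree : T.IsTree := ⟨hconn, hacyc⟩
  set E := T.edgeFinset.card with hE
  have hedge : E + 1 = n := htree.card_edgeFinset
  have hhs : ∑ w, T.degree w = 2 * E := T.sum_degrees_eq_twice_card_edges
  -- (2) degree split
  have hdegsplit : ∀ w, T.degree w = m w + c w := by
    intro w
    rw [hm, hc, SimpleGraph.degree]
    exact (Finset.card_inter_add_card_sdiff _ _).symm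
  -- (3) sum over S and complement
  have hsum3 : (∑ w ∈ S, T.degree w) + (∑ w ∈ Sᶜ, T.degree w) = 2 * E := by
    rw [Finset.sum_add_sum_compl, hhs]
  -- (4) cross double count
  have hXind : ∀ w : V, (T.neighborFinset w \ S).card
      = ∑ u ∈ Sᶜ, (if T.Adj w u then 1 else 0) := by
    intro w
    rw [← filter_adj_eq S w, Finset.card_filter]
  have hmind : ∀ u : V, (T.neighborFinset u ∩ S).card
      = ∑ w ∈ S, (if T.Adj u w then 1 else 0) := by
    intro u
    have : T.neighborFinset u ∩ S = S.filter (fun w => T.Adj u w) := by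
      ext w
      simp only [mem_inter, mem_filter, mem_neighborFinset]
      tauto
    rw [this, Finset.card_filter]
  have hcross : ∑ w ∈ S, c w = ∑ u ∈ Sᶜ, m u := by
    calc ∑ w ∈ S, c w = ∑ w ∈ S, ∑ u ∈ Sᶜ, (if T.Adj w u then 1 else 0) := by
          exact Finset.sum_congr rfl fun w _ => hXind w
      _ = ∑ u ∈ Sᶜ, ∑ w ∈ S, (if T.Adj w u then 1 else 0) := Finset.sum_comm
      _ = ∑ u ∈ Sᶜ, m u := by
          refine Finset.sum_congr rfl fun u _ => ?_
          have h1 : (∑ w ∈ S, if T.Adj w u then 1 else 0)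
              = ∑ w ∈ S, if T.Adj u w then 1 else 0 :=
            Finset.sum_congr rfl fun w _ => by
              by_cases h : T.Adj w u
              · rw [if_pos h, if_pos h.symm]
              · rw [if_neg h, if_neg (fun hh => h hh.symm)]
          rw [h1, hm]
          exact (hmind u).symm
  -- (5) degree bound on S
  have hdegS : ∑ w ∈ S, T.degree w ≤ 3 * k := by
    calc ∑ w ∈ S, T.degree w ≤ ∑ _w ∈ S, 3 := Finset.sum_le_sum fun w _ => hT w
      _ = 3 * k := by rw [Finset.sum_const, smul_eq_mul, mul_comm]
  -- expWeight in terms of fw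
  have hite : ∀ (p : Prop) (h1 h2 : Decidable p) (a b : ℝ),
      @ite _ p h1 a b = @ite _ p h2 a b := fun p h1 h2 a b => by congr
  have hEW : ∀ u, expWeight T S u = ∑ v ∈ S, 2 * fw hconn (↑S) v u := by
    intro u
    rw [expWeight]
    refine Finset.sum_congr rfl fun v _ => ?_
    rw [hite _ _ (Classical.dec _) _ _]
    exact summand_eq hconn hacyc (↑S) v u
  -- (6) the key identity
  have key : ∑ u ∈ Sᶜ, (3 - (c u : ℝ)) * expWeight T S u
      = 3 * ((∑ w ∈ S, c w : ℕ) : ℝ) := by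
    calc ∑ u ∈ Sᶜ, (3 - (c u : ℝ)) * expWeight T S u
        = ∑ u ∈ Sᶜ, ∑ v ∈ S, (3 - (c u : ℝ)) * (2 * fw hconn (↑S) v u) := by
          refine Finset.sum_congr rfl fun u _ => ?_
          rw [hEW u, Finset.mul_sum]
      _ = ∑ v ∈ S, ∑ u ∈ Sᶜ, (3 - (c u : ℝ)) * (2 * fw hconn (↑S) v u) := Finset.sum_comm
      _ = ∑ v ∈ S, 3 * ((c v : ℕ) : ℝ) := by
          refine Finset.sum_congr rfl fun v hv => ?_
          have hp := perv hconn hacyc S v hv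
          have hexp : ∑ u ∈ Sᶜ, (3 - (c u : ℝ)) * (2 * fw hconn (↑S) v u)
              = 6 * (∑ u ∈ Sᶜ, fw hconn (↑S) v u)
                - 2 * ∑ u ∈ Sᶜ, (c u : ℝ) * fw hconn (↑S) v u := by
            rw [Finset.mul_sum, Finset.mul_sum, ← Finset.sum_sub_distrib]
            exact Finset.sum_congr rfl fun u _ => by ring
          rw [hexp, hc] at *
          rw [hp]
          ring
      _ = 3 * ((∑ w ∈ S, c w : ℕ) : ℝ) := by
          rw [← Finset.mul_sum]
          push_cast
          ring
  -- (7) lower bound for the key sum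
  have hc3 : ∀ u, c u ≤ 3 := by
    intro u
    calc c u ≤ (T.neighborFinset u).card := Finset.card_le_card Finset.sdiff_subset
      _ ≤ 3 := hT u
  have low : ∑ u ∈ Sᶜ, (3 - (c u : ℝ)) ≤ ∑ u ∈ Sᶜ, (3 - (c u : ℝ)) * expWeight T S u := by
    refine Finset.sum_le_sum fun u hu => ?_
    have h1 : (1:ℝ) ≤ expWeight T S u := hS u (by simpa using hu)
    have h2 : (0:ℝ) ≤ 3 - (c u : ℝ) := by
      have := hc3 u
      have : (c u : ℝ) ≤ 3 := by exact_mod_cast this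
      linarith
    nlinarith
  -- assemble all in ℝ
  set X : ℕ := ∑ w ∈ S, c w with hX
  have hcard_compl : (Sᶜ.card : ℝ) = (n : ℝ) - k := by
    rw [Finset.card_compl]
    exact Nat.cast_sub hkn
  have hlow2 : 3 * ((n:ℝ) - k) - ((∑ u ∈ Sᶜ, c u : ℕ) : ℝ) ≤ 3 * (X:ℝ) := by
    have e1 : ∑ u ∈ Sᶜ, (3 - (c u : ℝ)) = 3 * ((n:ℝ) - k) - ((∑ u ∈ Sᶜ, c u : ℕ):ℝ) := by
      rw [Finset.sum_sub_distrib, Finset.sum_const, nsmul_eq_mul, hcard_compl]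
      push_cast
      ring
    rw [e1] at low
    rw [key] at low
    exact low
  -- edge count in ℝ
  have hnE : (n : ℝ) = (E : ℝ) + 1 := by exact_mod_cast hedge.symm
  have hreal_edges : ((∑ w ∈ S, T.degree w : ℕ) : ℝ) + ((∑ u ∈ Sᶜ, T.degree u : ℕ) : ℝ)
      = 2 * (E:ℝ) := by
    exact_mod_cast congrArg (Nat.cast : ℕ → ℝ) hsum3
  have hdeg_split_S : (∑ w ∈ S, T.degree w) = (∑ w ∈ S, m w) + X := by
    rw [hX, ← Finset.sum_add_distrib]
    exact Finset.sum_congr rfl fun w _ => hdegsplit w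
  have hdeg_split_C : (∑ u ∈ Sᶜ, T.degree u) = X + (∑ u ∈ Sᶜ, c u) := by
    have : (∑ u ∈ Sᶜ, T.degree u) = (∑ u ∈ Sᶜ, m u) + (∑ u ∈ Sᶜ, c u) := by
      rw [← Finset.sum_add_distrib]
      exact Finset.sum_congr rfl fun u _ => hdegsplit u
    rw [this, ← hcross, hX]
  -- final arithmetic
  have hXle : (X:ℝ) + ((∑ w ∈ S, m w : ℕ):ℝ) ≤ 3 * (k:ℝ) := by
    have h0 : (∑ w ∈ S, m w) + X ≤ 3 * k := by
      rw [← hdeg_split_S]; exact hdegS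
    have h1 := (Nat.cast_le (α := ℝ)).mpr h0
    push_cast at h1 ⊢
    linarith
  have hedge2 : ((∑ w ∈ S, m w : ℕ):ℝ) + (X:ℝ) + ((X:ℝ) + ((∑ u ∈ Sᶜ, c u : ℕ):ℝ))
      = 2 * (E:ℝ) := by
    rw [← hreal_edges, hdeg_split_S, hdeg_split_C]
    push_cast
    ring
  linarith [hlow2, hXle, hedge2, hnE, Nat.cast_nonneg (α := ℝ) (∑ w ∈ S, m w)]

end Global

end ExpAux

theorem stmt7 {V : Type*} [Fintype V] (T : SimpleGraph V) [DecidableRel T.Adj]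
    (hconn : T.Connected) (hacyc : T.IsAcyclic) (hT : ∀ v, T.degree v ≤ 3) :
    (Fintype.card V + 2 : ℝ) / 6 ≤ (expDomNum V T : ℝ) := by
  classical
  have hne : {k | ∃ S : Finset V, IsExpDomSet T S ∧ S.card = k}.Nonempty :=
    ⟨(Finset.univ : Finset V).card, Finset.univ,
      fun u hu => absurd (Finset.mem_univ u) hu, rfl⟩
  obtain ⟨S, hS, hcard⟩ := Nat.sInf_mem hne
  have hb := ExpAux.main_bound hconn hacyc hT S hS
  rw [expDomNum]
  rw [hcard] at hb
  linarith
end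

section
/- If G is a graph of maximum degree at most 3, then γ_e(G) ≥ n(G) / (6 log₂(n(G) + 2) + 4). -/
open Finset

open scoped Classical

section Aux

lemma geom_tail_le (L n : ℕ) : ∑ d ∈ Icc (L+1) n, (1/2:ℝ)^d ≤ (1/2)^L := by
  rcases lt_or_ge n (L+1) with h | h
  · rw [Finset.Icc_eq_empty (by omega)]
    simp
  · rw [← Finset.Ico_add_one_right_eq_Icc, Finset.sum_Ico_eq_sum_range]
    have : ∀ i, (1/2:ℝ)^(L+1+i) = (1/2)^(L+1) * (1/2)^i := fun i => pow_add _ _ _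
    simp_rw [this, ← Finset.mul_sum]
    have h2 := sum_geometric_two_le (n + 1 - (L+1))
    have hpos : (0:ℝ) < (1/2)^(L+1) := by positivity
    calc (1/2:ℝ)^(L+1) * ∑ i ∈ range (n + 1 - (L+1)), (1/2:ℝ)^i
        ≤ (1/2:ℝ)^(L+1) * 2 := by
          exact mul_le_mul_of_nonneg_left h2 (le_of_lt hpos)
      _ = (1/2)^L := by rw [pow_succ]; ring

/-- The sphere of radius `d` around `v`. -/
noncomputable def mySphere {V : Type*} [Fintype V] (G : SimpleGraph V) (v : V) (d : ℕ) :
    Finset V := univ.filter (fun u => G.edist v u = (d : ℕ∞))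

lemma exists_adj_edist_pred {V : Type*} (G : SimpleGraph V) {v u : V} {d : ℕ}
    (h : G.edist v u = ((d + 1 : ℕ) : ℕ∞)) : ∃ w, G.Adj w u ∧ G.edist v w = d := by
  have h' : G.edist u v = ((d + 1 : ℕ) : ℕ∞) := by rwa [SimpleGraph.edist_comm]
  obtain ⟨p, hp⟩ := SimpleGraph.exists_walk_of_edist_eq_coe h'
  cases p with
  | nil => simp at hp
  | cons hadj q' =>
    rename_i w
    refine ⟨w, hadj.symm, ?_⟩
    have hq'len : q'.length = d := by simpa using hp
    have h1 : G.edist v w ≤ d := by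
      have := SimpleGraph.edist_le q'.reverse
      simpa [hq'len] using this
    have h2 : (d : ℕ∞) ≤ G.edist v w := by
      have htri : G.edist v u ≤ G.edist v w + G.edist w u := SimpleGraph.edist_triangle
      have hwu : G.edist w u = 1 := SimpleGraph.edist_eq_one_iff_adj.mpr hadj.symm
      rw [h, hwu] at htri
      have htri' : ((d : ℕ∞)) + 1 ≤ G.edist v w + 1 := by
        simpa [Nat.cast_add, Nat.cast_one] using htri
      exact (ENat.add_le_add_iff_right (by simp)).mp htri'
    exact le_antisymm h1 h2

lemma mySphere_card_le {V : Type*} [Fintype V] (G : SimpleGraph V) [DecidableRel G.Adj]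
    (hG : ∀ v, G.degree v ≤ 3) (v : V) :
    ∀ d : ℕ, 1 ≤ d → (mySphere G v d).card ≤ 3 * 2 ^ (d - 1) := by
  intro d
  induction d with
  | zero => intro h; omega
  | succ e ih =>
    intro _
    rcases Nat.eq_or_lt_of_le (Nat.one_le_iff_ne_zero.mpr (Nat.succ_ne_zero e)) with h1 | h1
    · -- e = 0, d = 1 : sphere 1 ⊆ neighbors of v
      have he : e = 0 := by omega
      subst he
      have hsub : mySphere G v 1 ⊆ G.neighborFinset v := by
        intro u hu
        simp only [mySphere, mem_filter, mem_univ, true_and] at hu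
        rw [SimpleGraph.mem_neighborFinset]
        rw [show ((1:ℕ) : ℕ∞) = 1 by rfl, SimpleGraph.edist_eq_one_iff_adj] at hu
        exact hu
      calc (mySphere G v 1).card ≤ (G.neighborFinset v).card := Finset.card_le_card hsub
        _ ≤ 3 := by rw [SimpleGraph.card_neighborFinset_eq_degree]; exact hG v
        _ ≤ 3 * 2 ^ (1 - 1) := by norm_num
    · -- e ≥ 1
      have he1 : 1 ≤ e := by omega
      have hsub : mySphere G v (e + 1) ⊆
          (mySphere G v e).biUnion (fun w => G.neighborFinset w ∩ mySphere G v (e + 1)) := by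
        intro u hu
        have hu' : G.edist v u = ((e + 1 : ℕ) : ℕ∞) := by
          simpa [mySphere] using hu
        obtain ⟨w, hadj, hw⟩ := exists_adj_edist_pred G hu'
        refine Finset.mem_biUnion.mpr ⟨w, ?_, ?_⟩
        · simp [mySphere, hw]
        · simp only [Finset.mem_inter, SimpleGraph.mem_neighborFinset]
          exact ⟨hadj, hu⟩
      have hinner : ∀ w ∈ mySphere G v e,
          (G.neighborFinset w ∩ mySphere G v (e + 1)).card ≤ 2 := by
        intro w hw
        have hw' : G.edist v w = ((e : ℕ) : ℕ∞) := by simpa [mySphere] using hw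
        obtain ⟨e', he'⟩ : ∃ e', e = e' + 1 := ⟨e - 1, by omega⟩
        subst he'
        obtain ⟨w', hadj', hw''⟩ := exists_adj_edist_pred G hw'
        have hmem : w' ∈ G.neighborFinset w := by
          rw [SimpleGraph.mem_neighborFinset]; exact hadj'.symm
        have hnot : w' ∉ mySphere G v (e' + 1 + 1) := by
          simp only [mySphere, mem_filter, mem_univ, true_and, hw'']
          intro hcon
          have : (e' : ℕ) = e' + 1 + 1 := by exact_mod_cast hcon
          omega
        have hsub2 : G.neighborFinset w ∩ mySphere G v (e' + 1 + 1) ⊆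
            (G.neighborFinset w).erase w' := by
          intro x hx
          rw [Finset.mem_erase]
          refine ⟨?_, (Finset.mem_inter.mp hx).1⟩
          rintro rfl
          exact hnot (Finset.mem_inter.mp hx).2
        calc (G.neighborFinset w ∩ mySphere G v (e' + 1 + 1)).card
            ≤ ((G.neighborFinset w).erase w').card := Finset.card_le_card hsub2
          _ = (G.neighborFinset w).card - 1 := Finset.card_erase_of_mem hmem
          _ ≤ 3 - 1 := by
              have := hG w
              rw [SimpleGraph.card_neighborFinset_eq_degree]
              omega
          _ = 2 := rfl
      calc (mySphere G v (e + 1)).card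
          ≤ ∑ w ∈ mySphere G v e, (G.neighborFinset w ∩ mySphere G v (e + 1)).card :=
            (Finset.card_le_card hsub).trans Finset.card_biUnion_le
        _ ≤ ∑ w ∈ mySphere G v e, 2 := Finset.sum_le_sum hinner
        _ = 2 * (mySphere G v e).card := by rw [Finset.sum_const]; ring
        _ ≤ 2 * (3 * 2 ^ (e - 1)) := by
            exact Nat.mul_le_mul_left 2 (ih he1)
        _ = 3 * 2 ^ (e + 1 - 1) := by
            obtain ⟨e', rfl⟩ : ∃ e', e = e' + 1 := ⟨e - 1, by omega⟩
            simp only [Nat.add_sub_cancel]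
            rw [pow_succ]
            ring

lemma center_bound {V : Type*} [Fintype V] (G : SimpleGraph V) [DecidableRel G.Adj] (v : V)
    (hsph : ∀ d : ℕ, 1 ≤ d → (mySphere G v d).card ≤ 3 * 2 ^ (d - 1))
    (L : ℕ) (hL : 2 * Fintype.card V ≤ 2 ^ L) :
    ∑ u ∈ univ.filter (fun u => u ≠ v),
      (if G.edist v u = ⊤ then (0:ℝ) else 2 * (1/2:ℝ)^((G.edist v u).toNat)) ≤ 3 * L + 2 := by
  set n := Fintype.card V with hn
  set A := univ.filter (fun u : V => u ≠ v) with hA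
  set A' := A.filter (fun u : V => G.edist v u ≠ ⊤) with hA'
  have step1 : ∑ u ∈ A, (if G.edist v u = ⊤ then (0:ℝ) else 2 * (1/2:ℝ)^((G.edist v u).toNat))
      = ∑ u ∈ A', 2 * (1/2:ℝ)^((G.edist v u).toNat) := by
    conv_rhs => rw [hA', Finset.sum_filter]
    apply Finset.sum_congr rfl
    intro u _
    by_cases h : G.edist v u = ⊤ <;> simp [h]
  rw [step1]
  have hmap : ∀ u ∈ A', (G.edist v u).toNat ∈ Finset.Icc 1 n := by
    intro u hu
    simp only [hA', hA, Finset.mem_filter, Finset.mem_univ, true_and] at hu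
    obtain ⟨hne, htop⟩ := hu
    rw [Finset.mem_Icc]
    constructor
    · rcases Nat.eq_zero_or_pos (G.edist v u).toNat with h0 | h1
      · exfalso
        rcases ENat.toNat_eq_zero.mp h0 with h | h
        · exact hne (SimpleGraph.edist_eq_zero_iff.mp h).symm
        · exact htop h
      · exact h1
    · have hr : G.Reachable v u := SimpleGraph.reachable_of_edist_ne_top htop
      obtain ⟨p, hp, hlen⟩ := hr.exists_path_of_dist
      have : G.dist v u < n := hlen ▸ hp.length_lt
      have hd : (G.edist v u).toNat = G.dist v u := rfl
      omega
  rw [← Finset.sum_fiberwise_of_maps_to hmap (fun u => 2 * (1/2:ℝ)^((G.edist v u).toNat))]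
  have step2 : ∀ d ∈ Finset.Icc 1 n,
      ∑ u ∈ A'.filter (fun u => (G.edist v u).toNat = d), 2 * (1/2:ℝ)^((G.edist v u).toNat)
      = ((A'.filter (fun u => (G.edist v u).toNat = d)).card : ℝ) * (2 * (1/2:ℝ)^d) := by
    intro d _
    rw [Finset.sum_congr rfl (fun u hu => by
      rw [(Finset.mem_filter.mp hu).2]), Finset.sum_const, nsmul_eq_mul]
  rw [Finset.sum_congr rfl step2]
  have hfib : ∀ d ∈ Finset.Icc 1 n,
      (A'.filter (fun u => (G.edist v u).toNat = d)).card ≤ min (3 * 2 ^ (d-1)) n := by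
    intro d hd
    rw [Finset.mem_Icc] at hd
    refine le_min ?_ ?_
    · refine le_trans (Finset.card_le_card ?_) (hsph d hd.1)
      intro u hu
      simp only [Finset.mem_filter, hA', hA, Finset.mem_univ, true_and] at hu
      obtain ⟨⟨_, htop⟩, hval⟩ := hu
      simp only [mySphere, Finset.mem_filter, Finset.mem_univ, true_and]
      rw [← hval]
      exact (ENat.coe_toNat htop).symm
    · exact le_trans (Finset.card_le_card (Finset.filter_subset _ _))
        (le_trans (Finset.card_le_card (Finset.filter_subset _ _))
          (le_trans (Finset.card_le_card (Finset.filter_subset _ _)) (Finset.card_le_univ _)))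
  have step3 : ∑ d ∈ Finset.Icc 1 n,
      ((A'.filter (fun u => (G.edist v u).toNat = d)).card : ℝ) * (2 * (1/2:ℝ)^d)
      ≤ ∑ d ∈ Finset.Icc 1 n, (if d ≤ L then (3:ℝ) else (n:ℝ) * (2 * (1/2:ℝ)^d)) := by
    apply Finset.sum_le_sum
    intro d hd
    have hcard := hfib d hd
    rw [Finset.mem_Icc] at hd
    have hposval : (0:ℝ) ≤ 2 * (1/2:ℝ)^d := by positivity
    by_cases hdL : d ≤ L
    · rw [if_pos hdL]
      have h1 : ((A'.filter (fun u => (G.edist v u).toNat = d)).card : ℝ) ≤ 3 * 2 ^ (d-1) := by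
        exact_mod_cast le_trans hcard (min_le_left _ _)
      calc ((A'.filter (fun u => (G.edist v u).toNat = d)).card : ℝ) * (2 * (1/2:ℝ)^d)
          ≤ (3 * 2 ^ (d-1) : ℝ) * (2 * (1/2:ℝ)^d) := mul_le_mul_of_nonneg_right h1 hposval
        _ = 3 := by
            obtain ⟨d', rfl⟩ : ∃ d', d = d' + 1 := ⟨d - 1, by omega⟩
            have hcalc : (2:ℝ)^(d'+1) * (1/2:ℝ)^(d'+1) = 1 := by
              rw [← mul_pow]; norm_num
            simp only [Nat.add_sub_cancel]
            calc (3 * 2 ^ d' : ℝ) * (2 * (1/2:ℝ)^(d'+1))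
                = 3 * ((2:ℝ)^(d'+1) * (1/2:ℝ)^(d'+1)) := by rw [pow_succ]; ring
              _ = 3 := by rw [hcalc]; ring
    · rw [if_neg hdL]
      have h1 : ((A'.filter (fun u => (G.edist v u).toNat = d)).card : ℝ) ≤ n := by
        exact_mod_cast le_trans hcard (min_le_right _ _)
      exact mul_le_mul_of_nonneg_right h1 hposval
  refine le_trans step3 ?_
  rw [Finset.sum_ite]
  have hpart1 : ∑ _d ∈ (Finset.Icc 1 n).filter (fun d => d ≤ L), (3:ℝ) ≤ 3 * L := by
    rw [Finset.sum_const, nsmul_eq_mul]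
    have hsub : (Finset.Icc 1 n).filter (fun d => d ≤ L) ⊆ Finset.Icc 1 L := by
      intro d hd
      simp only [Finset.mem_filter, Finset.mem_Icc] at hd ⊢
      omega
    have h1 := Finset.card_le_card hsub
    rw [Nat.card_Icc] at h1
    have h2 : ((Finset.Icc 1 n).filter (fun d => d ≤ L)).card ≤ L := by omega
    calc (((Finset.Icc 1 n).filter (fun d => d ≤ L)).card : ℝ) * 3
        ≤ (L:ℝ) * 3 := by
          apply mul_le_mul_of_nonneg_right _ (by norm_num)
          exact_mod_cast h2
      _ = 3 * L := by ring
  have hpart2 : ∑ d ∈ (Finset.Icc 1 n).filter (fun d => ¬ d ≤ L), (n:ℝ) * (2 * (1/2:ℝ)^d)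
      ≤ 2 := by
    have hsub : (Finset.Icc 1 n).filter (fun d => ¬ d ≤ L) ⊆ Finset.Icc (L+1) n := by
      intro d hd
      simp only [Finset.mem_filter, Finset.mem_Icc] at hd ⊢
      omega
    calc ∑ d ∈ (Finset.Icc 1 n).filter (fun d => ¬ d ≤ L), (n:ℝ) * (2 * (1/2:ℝ)^d)
        ≤ ∑ d ∈ Finset.Icc (L+1) n, (n:ℝ) * (2 * (1/2:ℝ)^d) := by
          apply Finset.sum_le_sum_of_subset_of_nonneg hsub
          intro d _ _
          positivity
      _ = (n:ℝ) * 2 * ∑ d ∈ Finset.Icc (L+1) n, (1/2:ℝ)^d := by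
          rw [Finset.mul_sum]
          apply Finset.sum_congr rfl
          intro d _
          ring
      _ ≤ (n:ℝ) * 2 * (1/2:ℝ)^L := by
          apply mul_le_mul_of_nonneg_left (geom_tail_le L n) (by positivity)
      _ ≤ 2 := by
          have h2L : (2 * n : ℝ) ≤ 2 ^ L := by exact_mod_cast hL
          have hpow : (0:ℝ) < 2 ^ L := by positivity
          rw [show ((1:ℝ)/2)^L = ((2:ℝ)^L)⁻¹ by rw [one_div, inv_pow]]
          rw [← div_eq_mul_inv, div_le_iff₀ hpow]
          nlinarith
  linarith

end Aux

theorem stmt8 {V : Type*} [Fintype V] (G : SimpleGraph V) [DecidableRel G.Adj]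
    (hG : ∀ v, G.degree v ≤ 3) :
    (Fintype.card V : ℝ) / (6 * Real.logb 2 (Fintype.card V + 2) + 4) ≤ (expDomNum V G : ℝ) := by
  obtain ⟨S, hS, hcard⟩ : ∃ S : Finset V, IsExpDomSet G S ∧ S.card = expDomNum V G := by
    have hne : Set.Nonempty {k | ∃ S : Finset V, IsExpDomSet G S ∧ S.card = k} :=
      ⟨Fintype.card V, Finset.univ, fun u hu => absurd (Finset.mem_univ u) hu, Finset.card_univ⟩
    exact Nat.sInf_mem hne
  set n := Fintype.card V with hn
  set k := expDomNum V G with hk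
  have hD : (0:ℝ) < 6 * Real.logb 2 ((n:ℝ) + 2) + 4 := by
    have hcast : (0:ℝ) ≤ (n:ℝ) := Nat.cast_nonneg n
    have : (0:ℝ) ≤ Real.logb 2 ((n:ℝ) + 2) :=
      Real.logb_nonneg (by norm_num) (by linarith)
    linarith
  rcases Nat.eq_zero_or_pos n with h0 | hpos
  · rw [h0]
    push_cast
    rw [zero_div]
    exact Nat.cast_nonneg k
  -- main case n ≥ 1
  set L := Nat.clog 2 (2 * n) with hLdef
  have hL : 2 * n ≤ 2 ^ L := Nat.le_pow_clog (by norm_num) _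
  -- per-center bound
  have hv : ∀ v ∈ S, ∑ u ∈ univ \ S,
      (if sdist G (↑S) u v = ⊤ then (0:ℝ) else 2 * (1 / 2 : ℝ) ^ (sdist G (↑S) u v).toNat)
      ≤ 3 * L + 2 := by
    intro v hvS
    have hle : ∀ u ∈ univ \ S,
        (if sdist G (↑S) u v = ⊤ then (0:ℝ) else 2 * (1 / 2 : ℝ) ^ (sdist G (↑S) u v).toNat)
        ≤ (if G.edist v u = ⊤ then (0:ℝ) else 2 * (1/2:ℝ)^((G.edist v u).toNat)) := by
      intro u hu
      by_cases hsd : sdist G (↑S) u v = ⊤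
      · rw [if_pos hsd]
        split_ifs with h
        · exact le_refl _
        · positivity
      · rw [if_neg hsd]
        have hedist_le : G.edist u v ≤ sdist G (↑S) u v :=
          le_iInf fun p => SimpleGraph.edist_le p.1
        have hetop : G.edist v u ≠ ⊤ := by
          rw [SimpleGraph.edist_comm]
          intro h
          exact hsd (top_le_iff.mp (h ▸ hedist_le))
        rw [if_neg hetop]
        have hto : (G.edist v u).toNat ≤ (sdist G (↑S) u v).toNat := by
          rw [SimpleGraph.edist_comm]
          exact ENat.toNat_le_toNat hedist_le hsd
        have hpow := pow_le_pow_of_le_one (by norm_num : (0:ℝ) ≤ 1/2)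
          (by norm_num : (1/2:ℝ) ≤ 1) hto
        linarith
    calc ∑ u ∈ univ \ S,
        (if sdist G (↑S) u v = ⊤ then (0:ℝ) else 2 * (1 / 2 : ℝ) ^ (sdist G (↑S) u v).toNat)
        ≤ ∑ u ∈ univ \ S, (if G.edist v u = ⊤ then (0:ℝ) else 2 * (1/2:ℝ)^((G.edist v u).toNat)) :=
          Finset.sum_le_sum hle
      _ ≤ ∑ u ∈ univ.filter (fun u => u ≠ v),
          (if G.edist v u = ⊤ then (0:ℝ) else 2 * (1/2:ℝ)^((G.edist v u).toNat)) := by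
          apply Finset.sum_le_sum_of_subset_of_nonneg
          · intro u hu
            rw [Finset.mem_sdiff] at hu
            rw [Finset.mem_filter]
            exact ⟨Finset.mem_univ u, fun h => hu.2 (h ▸ hvS)⟩
          · intro u _ _
            split_ifs with h
            · exact le_refl _
            · positivity
      _ ≤ 3 * L + 2 := center_bound G v (mySphere_card_le G hG v) L hL
  -- sum of weights
  have hkn : k ≤ n := by rw [← hcard]; exact Finset.card_le_univ S
  have h1 : ((n - k : ℕ) : ℝ) ≤ ∑ u ∈ univ \ S, expWeight G S u := by
    have hone : ∀ u ∈ univ \ S, (1:ℝ) ≤ expWeight G S u :=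
      fun u hu => hS u (Finset.mem_sdiff.mp hu).2
    calc ((n - k : ℕ) : ℝ) = ((univ \ S).card : ℝ) := by
          rw [Finset.card_sdiff_of_subset (Finset.subset_univ S), Finset.card_univ, hcard]
      _ = ∑ _u ∈ univ \ S, (1:ℝ) := by rw [Finset.sum_const, nsmul_eq_mul, mul_one]
      _ ≤ _ := Finset.sum_le_sum hone
  have h2 : ∑ u ∈ univ \ S, expWeight G S u ≤ (k:ℝ) * (3 * L + 2) := by
    calc ∑ u ∈ univ \ S, expWeight G S u
        = ∑ v ∈ S, ∑ u ∈ univ \ S,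
          (if sdist G (↑S) u v = ⊤ then (0:ℝ) else 2 * (1 / 2 : ℝ) ^ (sdist G (↑S) u v).toNat) := by
          unfold expWeight
          rw [Finset.sum_comm]
      _ ≤ ∑ _v ∈ S, ((3:ℝ) * L + 2) := Finset.sum_le_sum hv
      _ = (k:ℝ) * (3 * L + 2) := by
          rw [Finset.sum_const, nsmul_eq_mul, hcard]
  have hmain : (n:ℝ) ≤ (k:ℝ) * (3 * L + 3) := by
    have hc : ((n - k : ℕ) : ℝ) = (n:ℝ) - (k:ℝ) := by
      rw [Nat.cast_sub hkn]
    have := le_trans h1 h2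
    rw [hc] at this
    have hk0 : (0:ℝ) ≤ (k:ℝ) := Nat.cast_nonneg k
    nlinarith
  -- L ≤ 2 logb 2 (n+2)
  have hlogL : (L:ℝ) ≤ 2 * Real.logb 2 ((n:ℝ) + 2) := by
    have hup : (2:ℕ)^L ≤ (n+2)^2 := by
      rcases Nat.eq_zero_or_pos L with hL0 | hL1
      · rw [hL0]
        nlinarith
      · have hlt := Nat.pow_pred_clog_lt_self (by norm_num : 1 < 2)
          (by omega : 1 < 2 * n)
        rw [← hLdef] at hlt
        have h2 : 2^L = 2 * 2^(L-1) := by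
          rw [← pow_succ']
          congr 1
          omega
        have hlt' : 2 ^ (L-1) < 2 * n := hlt
        have h3 : 2^L < 4*n := by nlinarith
        nlinarith
    have hupR : ((2:ℝ))^L ≤ ((n:ℝ) + 2)^2 := by exact_mod_cast hup
    calc (L:ℝ) = Real.logb 2 ((2:ℝ)^L) := by
          rw [Real.logb_pow, Real.logb_self_eq_one (by norm_num), mul_one]
      _ ≤ Real.logb 2 (((n:ℝ) + 2)^2) := by
          apply Real.logb_le_logb_of_le (by norm_num) (by positivity) hupR
      _ = 2 * Real.logb 2 ((n:ℝ) + 2) := by rw [Real.logb_pow]; norm_num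
  rw [div_le_iff₀ hD]
  calc (n:ℝ) ≤ (k:ℝ) * (3 * L + 3) := hmain
    _ ≤ (k:ℝ) * (6 * Real.logb 2 ((n:ℝ) + 2) + 4) := by
        apply mul_le_mul_of_nonneg_left _ (Nat.cast_nonneg k)
        linarith
end

section
/- Let G be a graph of maximum degree at most 3 and let S be an exponential dominating set of G with |S| = k. Then n(G) ≤ (6 log₂ k + 13) k. -/
open Finset

section AuxExpDom
open SimpleGraph

lemma exists_adj_dist_pred {V : Type*} (G : SimpleGraph V) {u v : V} {i : ℕ}
    (h : G.dist u v = i + 1) : ∃ w, G.Adj u w ∧ G.dist w v = i := by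
  obtain ⟨p, hp⟩ := SimpleGraph.exists_walk_of_dist_ne_zero (by simp [h] : G.dist u v ≠ 0)
  have hne : u ≠ v := by rintro rfl; simp [SimpleGraph.dist_self] at h
  obtain ⟨w, hadj, q, rfl⟩ := SimpleGraph.Walk.exists_eq_cons_of_ne hne p
  refine ⟨w, hadj, ?_⟩
  have h1 : G.dist w v ≤ i := by
    have := SimpleGraph.dist_le q
    simp [SimpleGraph.Walk.length_cons, h] at hp
    omega
  have h2 : i ≤ G.dist w v := by
    by_cases hd : G.dist w v = 0
    · have hreach : G.Reachable w v := ⟨q⟩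
      have hwv : w = v := hreach.dist_eq_zero_iff.mp hd
      have : G.dist u v ≤ 1 := by
        subst hwv
        simpa using SimpleGraph.dist_le (SimpleGraph.Walk.cons hadj SimpleGraph.Walk.nil)
      omega
    · obtain ⟨r, hr⟩ := SimpleGraph.exists_walk_of_dist_ne_zero hd
      have := SimpleGraph.dist_le (SimpleGraph.Walk.cons hadj r)
      simp [SimpleGraph.Walk.length_cons, hr, h] at this
      omega
  omega

lemma sphere_card_le {V : Type*} [Fintype V] [DecidableEq V] (G : SimpleGraph V)
    [DecidableRel G.Adj] (hG : ∀ v, G.degree v ≤ 3) (v : V) :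
    ∀ i, 1 ≤ i → (univ.filter (fun u => G.dist u v = i)).card ≤ 3 * 2 ^ (i - 1) := by
  intro i hi
  induction i, hi using Nat.le_induction with
  | base =>
    have hsub : (univ.filter (fun u => G.dist u v = 1)) ⊆ G.neighborFinset v := by
      intro u hu
      simp only [mem_filter, mem_univ, true_and] at hu
      rw [SimpleGraph.mem_neighborFinset]
      exact ((SimpleGraph.dist_eq_one_iff_adj.mp hu)).symm
    calc (univ.filter (fun u => G.dist u v = 1)).card ≤ (G.neighborFinset v).card :=
          Finset.card_le_card hsub
      _ ≤ 3 := by rw [SimpleGraph.card_neighborFinset_eq_degree]; exact hG v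
      _ ≤ 3 * 2 ^ (1 - 1) := by norm_num
  | succ i hi ih =>
    set s := univ.filter (fun u => G.dist u v = i + 1) with hs
    have hstep : ∀ u : V, ∃ w, G.dist u v = i + 1 → G.Adj u w ∧ G.dist w v = i := by
      intro u
      by_cases h : G.dist u v = i + 1
      · obtain ⟨w, hw⟩ := exists_adj_dist_pred G h
        exact ⟨w, fun _ => hw⟩
      · exact ⟨u, fun hc => absurd hc h⟩
    choose f hf using hstep
    have himg : s.image f ⊆ univ.filter (fun u => G.dist u v = i) := by
      intro w hw
      obtain ⟨u, hu, rfl⟩ := Finset.mem_image.mp hw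
      simp only [hs, mem_filter, mem_univ, true_and] at hu ⊢
      exact (hf u hu).2
    have hfib : ∀ w ∈ s.image f, (s.filter (fun u => f u = w)).card ≤ 2 := by
      intro w hw
      have hwv : G.dist w v = i := by
        have := himg hw
        simpa using this
      obtain ⟨j, rfl⟩ : ∃ j, i = j + 1 := ⟨i - 1, by omega⟩
      obtain ⟨x, hxadj, hxd⟩ := exists_adj_dist_pred G hwv
      have hsub : s.filter (fun u => f u = w) ⊆ G.neighborFinset w \ {x} := by
        intro u hu
        simp only [mem_filter, hs, mem_univ, true_and] at hu
        obtain ⟨hud, hfu⟩ := hu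
        have hadj : G.Adj u w := hfu ▸ (hf u hud).1
        rw [Finset.mem_sdiff, SimpleGraph.mem_neighborFinset, Finset.mem_singleton]
        refine ⟨hadj.symm, ?_⟩
        rintro rfl
        omega
      have hxmem : x ∈ G.neighborFinset w := by
        rw [SimpleGraph.mem_neighborFinset]; exact hxadj
      calc (s.filter (fun u => f u = w)).card ≤ (G.neighborFinset w \ {x}).card :=
            Finset.card_le_card hsub
        _ = (G.neighborFinset w).card - 1 := by
            rw [Finset.card_sdiff_of_subset (by simpa using hxmem)]; simp
        _ ≤ 2 := by
            have := hG w
            rw [SimpleGraph.card_neighborFinset_eq_degree]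
            omega
    calc s.card ≤ 2 * (s.image f).card := Finset.card_le_mul_card_image s 2 hfib
      _ ≤ 2 * (univ.filter (fun u => G.dist u v = i)).card := by
          exact Nat.mul_le_mul_left 2 (Finset.card_le_card himg)
      _ ≤ 2 * (3 * 2 ^ (i - 1)) := Nat.mul_le_mul_left 2 ih
      _ ≤ 3 * 2 ^ (i + 1 - 1) := by
          rw [show i + 1 - 1 = (i - 1) + 1 by omega]
          ring_nf
          omega

lemma sum_sphere_le {V : Type*} [Fintype V] [DecidableEq V] (G : SimpleGraph V)
    [DecidableRel G.Adj] (hG : ∀ v, G.degree v ≤ 3) (v : V) (D : ℕ) :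
    ∑ u ∈ univ.filter (fun u => 1 ≤ G.dist u v ∧ G.dist u v ≤ D),
      2 * (1 / 2 : ℝ) ^ (G.dist u v) ≤ 3 * D := by
  set T := univ.filter (fun u => 1 ≤ G.dist u v ∧ G.dist u v ≤ D) with hT
  have hmaps : ∀ u ∈ T, G.dist u v ∈ Finset.Icc 1 D := by
    intro u hu
    simp only [hT, mem_filter, mem_univ, true_and] at hu
    simpa [Finset.mem_Icc] using hu
  rw [← Finset.sum_fiberwise_of_maps_to hmaps (fun u => 2 * (1 / 2 : ℝ) ^ (G.dist u v))]
  have hinner : ∀ j ∈ Finset.Icc 1 D,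
      ∑ u ∈ T.filter (fun u => G.dist u v = j), 2 * (1 / 2 : ℝ) ^ (G.dist u v) ≤ 3 := by
    intro j hj
    rw [Finset.mem_Icc] at hj
    have hcard : (T.filter (fun u => G.dist u v = j)).card ≤ 3 * 2 ^ (j - 1) := by
      refine le_trans (Finset.card_le_card ?_) (sphere_card_le G hG v j hj.1)
      intro u hu
      simp only [hT, mem_filter, mem_univ, true_and] at hu ⊢
      exact hu.2
    calc ∑ u ∈ T.filter (fun u => G.dist u v = j), 2 * (1 / 2 : ℝ) ^ (G.dist u v)
        = (T.filter (fun u => G.dist u v = j)).card * (2 * (1 / 2 : ℝ) ^ j) := by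
          rw [Finset.sum_congr rfl (fun u hu => by
            simp only [mem_filter] at hu
            rw [hu.2]), Finset.sum_const, nsmul_eq_mul]
      _ ≤ (3 * 2 ^ (j - 1) : ℕ) * (2 * (1 / 2 : ℝ) ^ j) := by
          apply mul_le_mul_of_nonneg_right
          · exact_mod_cast hcard
          · positivity
      _ = 3 := by
          push_cast
          have h2 : (2 : ℝ) ^ (j - 1) * 2 = 2 ^ j := by
            rw [← pow_succ]
            congr 1
            omega
          have h3 : (2 : ℝ) ^ j * (1 / 2 : ℝ) ^ j = 1 := by
            rw [← mul_pow]
            norm_num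
          calc (3 : ℝ) * 2 ^ (j - 1) * (2 * (1 / 2) ^ j)
              = 3 * ((2 ^ (j - 1) * 2) * (1 / 2) ^ j) := by ring
            _ = 3 * (2 ^ j * (1 / 2) ^ j) := by rw [h2]
            _ = 3 := by rw [h3]; ring
  calc ∑ j ∈ Finset.Icc 1 D, ∑ u ∈ T.filter (fun u => G.dist u v = j),
        2 * (1 / 2 : ℝ) ^ (G.dist u v)
      ≤ ∑ j ∈ Finset.Icc 1 D, (3 : ℝ) := Finset.sum_le_sum hinner
    _ ≤ 3 * D := by
        rw [Finset.sum_const, nsmul_eq_mul, Nat.card_Icc, Nat.add_sub_cancel]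
        ring_nf
        exact le_rfl

lemma sdist_exists_walk {V : Type*} (G : SimpleGraph V) (S : Set V) {u v : V}
    (h : sdist G S u v ≠ ⊤) :
    ∃ p : G.Walk u v, (p.length : ℕ∞) ≤ sdist G S u v := by
  have hlt : sdist G S u v < sdist G S u v + 1 := (ENat.lt_add_one_iff h).mpr le_rfl
  conv at hlt => lhs; rw [sdist]
  rw [iInf_lt_iff] at hlt
  obtain ⟨p, hp⟩ := hlt
  exact ⟨(p : G.Walk u v), (ENat.lt_add_one_iff h).mp hp⟩

end AuxExpDom

theorem stmt9 {V : Type*} [Fintype V] (G : SimpleGraph V) [DecidableRel G.Adj]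
    (hG : ∀ v, G.degree v ≤ 3) (S : Finset V) (hS : IsExpDomSet G S) (k : ℕ) (hk : S.card = k) :
    (Fintype.card V : ℝ) ≤ (6 * Real.logb 2 k + 13) * k := by
  classical
  rcases Nat.eq_zero_or_pos k with hk0 | hkpos
  · subst hk0
    have hSe : S = ∅ := Finset.card_eq_zero.mp hk
    have hV : Fintype.card V = 0 := by
      by_contra h
      obtain ⟨u⟩ := Fintype.card_pos_iff.mp (Nat.pos_of_ne_zero h)
      have := hS u (by simp [hSe])
      rw [expWeight, hSe] at this
      simp at this
      linarith
    simp [hV]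
  · -- main case
    set D : ℕ := Nat.clog 2 k + 1 with hD
    set wD : V → V → ℝ := fun u v =>
      if sdist G (↑S) u v ≤ (D : ℕ∞) then 2 * (1 / 2 : ℝ) ^ (sdist G (↑S) u v).toNat else 0
      with hwD
    have hwD_nonneg : ∀ u v, 0 ≤ wD u v := by
      intro u v; rw [hwD]; dsimp only; split <;> positivity
    have hkD : (k : ℝ) * (1 / 2) ^ D ≤ 1 / 2 := by
      have hkle : (k : ℝ) ≤ 2 ^ (Nat.clog 2 k) := by
        exact_mod_cast Nat.le_pow_clog one_lt_two k
      have : (k : ℝ) * (1 / 2) ^ D ≤ 2 ^ (Nat.clog 2 k) * (1 / 2) ^ (Nat.clog 2 k + 1) := by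
        rw [hD]; exact mul_le_mul_of_nonneg_right hkle (by positivity)
      refine this.trans ?_
      rw [pow_succ, ← mul_assoc, ← mul_pow]
      norm_num
    -- step 1
    have step1 : ∀ u, u ∉ S → (1 : ℝ) / 2 ≤ ∑ v ∈ S, wD u v := by
      intro u hu
      have h1 := hS u hu
      rw [expWeight] at h1
      have hterm : ∀ v ∈ S,
          (if sdist G (↑S) u v = ⊤ then 0 else 2 * (1 / 2 : ℝ) ^ (sdist G (↑S) u v).toNat)
            ≤ wD u v + (1 / 2 : ℝ) ^ D := by
        intro v _
        by_cases hle : sdist G (↑S) u v ≤ (D : ℕ∞)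
        · have htop : sdist G (↑S) u v ≠ ⊤ := (hle.trans_lt (ENat.coe_lt_top D)).ne
          rw [if_neg htop, hwD]
          dsimp only
          rw [if_pos hle]
          have : (0:ℝ) ≤ (1/2:ℝ)^D := by positivity
          linarith
        · rw [hwD]; dsimp only; rw [if_neg hle, zero_add]
          by_cases htop : sdist G (↑S) u v = ⊤
          · rw [if_pos htop]; positivity
          · rw [if_neg htop]
            have hDlt : (D : ℕ∞) < sdist G (↑S) u v := lt_of_not_ge hle
            have htn : D + 1 ≤ (sdist G (↑S) u v).toNat := by
              have := ENat.coe_toNat htop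
              rw [← this] at hDlt
              exact_mod_cast hDlt
            calc 2 * (1 / 2 : ℝ) ^ (sdist G (↑S) u v).toNat
                ≤ 2 * (1 / 2 : ℝ) ^ (D + 1) := by
                  apply mul_le_mul_of_nonneg_left _ (by norm_num)
                  exact pow_le_pow_of_le_one (by norm_num) (by norm_num) htn
              _ = (1 / 2 : ℝ) ^ D := by rw [pow_succ]; ring
      have h2 : (1 : ℝ) ≤ ∑ v ∈ S, (wD u v + (1 / 2 : ℝ) ^ D) :=
        h1.trans (Finset.sum_le_sum hterm)
      rw [Finset.sum_add_distrib, Finset.sum_const, hk, nsmul_eq_mul] at h2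
      linarith
    -- step 2
    have step2 : ∀ v ∈ S, ∑ u ∈ Sᶜ, wD u v ≤ 3 * D := by
      intro v hv
      have hle : ∀ u ∈ Sᶜ, wD u v ≤
          (if 1 ≤ G.dist u v ∧ G.dist u v ≤ D then 2 * (1 / 2 : ℝ) ^ (G.dist u v) else 0) := by
        intro u hu
        rw [hwD]; dsimp only
        by_cases h : sdist G (↑S) u v ≤ (D : ℕ∞)
        · rw [if_pos h]
          have htop : sdist G (↑S) u v ≠ ⊤ := (h.trans_lt (ENat.coe_lt_top D)).ne
          obtain ⟨p, hp⟩ := sdist_exists_walk G (↑S) htop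
          have hreach : G.Reachable u v := ⟨p⟩
          have hne : u ≠ v := by
            rintro rfl
            exact (Finset.mem_compl.mp hu) hv
          have hd1 : 1 ≤ G.dist u v := hreach.pos_dist_of_ne hne
          have hlp : p.length ≤ (sdist G (↑S) u v).toNat := by
            have := ENat.toNat_le_toNat hp htop
            simpa using this
          have hdle : G.dist u v ≤ (sdist G (↑S) u v).toNat :=
            (SimpleGraph.dist_le p).trans hlp
          have htnD : (sdist G (↑S) u v).toNat ≤ D := by
            have := ENat.toNat_le_toNat h (ENat.coe_ne_top D)
            simpa using this
          rw [if_pos ⟨hd1, hdle.trans htnD⟩]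
          apply mul_le_mul_of_nonneg_left _ (by norm_num)
          exact pow_le_pow_of_le_one (by norm_num) (by norm_num) hdle
        · rw [if_neg h]
          split <;> positivity
      calc ∑ u ∈ Sᶜ, wD u v
          ≤ ∑ u ∈ Sᶜ, (if 1 ≤ G.dist u v ∧ G.dist u v ≤ D then
              2 * (1 / 2 : ℝ) ^ (G.dist u v) else 0) := Finset.sum_le_sum hle
        _ ≤ ∑ u ∈ (univ : Finset V), (if 1 ≤ G.dist u v ∧ G.dist u v ≤ D then
              2 * (1 / 2 : ℝ) ^ (G.dist u v) else 0) := by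
            apply Finset.sum_le_sum_of_subset_of_nonneg (Finset.subset_univ _)
            intro u _ _
            split <;> positivity
        _ = ∑ u ∈ univ.filter (fun u => 1 ≤ G.dist u v ∧ G.dist u v ≤ D),
              2 * (1 / 2 : ℝ) ^ (G.dist u v) := (Finset.sum_filter _ _).symm
        _ ≤ 3 * D := sum_sphere_le G hG v D
    -- step 3
    have step3 : ((Sᶜ).card : ℝ) * (1 / 2) ≤ (k : ℝ) * (3 * D) := by
      calc ((Sᶜ).card : ℝ) * (1 / 2) = ∑ _u ∈ Sᶜ, (1 / 2 : ℝ) := by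
            rw [Finset.sum_const, nsmul_eq_mul]
        _ ≤ ∑ u ∈ Sᶜ, ∑ v ∈ S, wD u v := by
            apply Finset.sum_le_sum
            intro u hu
            exact step1 u (Finset.mem_compl.mp hu)
        _ = ∑ v ∈ S, ∑ u ∈ Sᶜ, wD u v := Finset.sum_comm
        _ ≤ ∑ _v ∈ S, (3 * D : ℝ) := Finset.sum_le_sum step2
        _ = (k : ℝ) * (3 * D) := by rw [Finset.sum_const, hk, nsmul_eq_mul]
    have hcard : ((Sᶜ).card : ℝ) = (Fintype.card V : ℝ) - k := by
      rw [Finset.card_compl, Nat.cast_sub (Finset.card_le_univ S), hk]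
    have hn : (Fintype.card V : ℝ) ≤ k + 6 * D * k := by
      rw [hcard] at step3
      nlinarith
    -- step 4
    have step4 : (D : ℝ) ≤ Real.logb 2 k + 2 := by
      rcases Nat.lt_or_ge k 2 with hk1 | hk2
      · have : k = 1 := by omega
        subst this
        norm_num [hD, Nat.clog_one_right, Real.logb_one]
      · have hm1 : 1 ≤ Nat.clog 2 k := Nat.clog_pos one_lt_two hk2
        have hlt : 2 ^ (Nat.clog 2 k - 1) < k :=
          Nat.pow_pred_clog_lt_self one_lt_two (by omega)
        have hR : (2 : ℝ) ^ (Nat.clog 2 k - 1) ≤ (k : ℝ) := by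
          exact_mod_cast hlt.le
        have hlogle : ((Nat.clog 2 k - 1 : ℕ) : ℝ) ≤ Real.logb 2 k := by
          have h1 : Real.logb 2 ((2:ℝ) ^ (Nat.clog 2 k - 1)) ≤ Real.logb 2 k :=
            Real.logb_le_logb_of_le one_lt_two (by positivity) hR
          rwa [Real.logb_pow, Real.logb_self_eq_one (by norm_num), mul_one] at h1
        have : ((Nat.clog 2 k - 1 : ℕ) : ℝ) = (Nat.clog 2 k : ℝ) - 1 := by
          push_cast [Nat.cast_sub hm1]
          ring
        rw [this] at hlogle
        rw [hD]
        push_cast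
        linarith
    have hk1R : (1 : ℝ) ≤ k := by exact_mod_cast hkpos
    nlinarith [hn, step4, hk1R]
end

section
/- Let T be the complete rooted binary-branching tree of depth d in which the root has 3 children and every other non-leaf vertex has 2 children. Let each vertex be placed in a random set S independently with probability p ∈ [0,1]. Then the expected value of w_{(T,S)}(r) at the root r equals 2p + 3(1 − p)(1 − (1 − p)^d). -/
open Finset

set_option linter.unusedSectionVars false
set_option linter.unusedVariables false
set_option maxHeartbeats 1000000

open SimpleGraph

section
variable {V : Type*} [Fintype V] [DecidableEq V] {T : SimpleGraph V} [DecidableRel T.Adj] {r : V}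

lemma isPath_concat_iff {u v w : V} (p : T.Walk u v) (h : T.Adj v w) :
    (p.concat h).IsPath ↔ p.IsPath ∧ w ∉ p.support := by
  simp [Walk.isPath_def, Walk.support_concat, List.concat_eq_append, List.nodup_append]
  exact fun _ => ⟨fun h hw => h w hw rfl, fun h a ha hae => h (hae ▸ ha)⟩

lemma path_length_eq_dist (hconn : T.Connected) (hacyc : T.IsAcyclic)
    {u v : V} {p : T.Walk u v} (hp : p.IsPath) : p.length = T.dist u v := by
  obtain ⟨q, hq, hql⟩ := hconn.exists_path_of_dist u v
  have h2 := hacyc.path_unique ⟨p, hp⟩ ⟨q, hq⟩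
  rw [show p = q from congrArg Subtype.val h2, hql]

lemma dist_le_of_mem_support (hconn : T.Connected) (hacyc : T.IsAcyclic)
    {u v x : V} {p : T.Walk u v} (hp : p.IsPath) (hx : x ∈ p.support) :
    T.dist u x ≤ T.dist u v := by
  rw [← path_length_eq_dist hconn hacyc hp,
    ← path_length_eq_dist hconn hacyc (hp.takeUntil hx)]
  exact p.length_takeUntil_le hx

lemma adj_dist (hconn : T.Connected) (hacyc : T.IsAcyclic) (r : V) {u w : V} (h : T.Adj u w) :
    T.dist r w = T.dist r u + 1 ∨ T.dist r u = T.dist r w + 1 := by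
  obtain ⟨p, hp, hpl⟩ := hconn.exists_path_of_dist r u
  by_cases hw : w ∈ p.support
  · right
    have ht := hp.takeUntil hw
    have hd := hp.dropUntil hw
    have hlen : (p.takeUntil w hw).length + (p.dropUntil w hw).length = p.length := by
      rw [← Walk.length_append, p.take_spec hw]
    have h2 := path_length_eq_dist hconn hacyc hd
    have h3 : T.dist w u = 1 := dist_eq_one_iff_adj.mpr h.symm
    have h4 := path_length_eq_dist hconn hacyc ht
    omega
  · left
    have hc : (p.concat h).IsPath := (isPath_concat_iff p h).mpr ⟨hp, hw⟩
    have h5 := path_length_eq_dist hconn hacyc hc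
    rw [Walk.length_concat] at h5
    omega

lemma exists_unique_parent (hconn : T.Connected) (hacyc : T.IsAcyclic) (r : V) {v : V} {k : ℕ}
    (hv : T.dist r v = k + 1) : ∃! w, T.Adj w v ∧ T.dist r w = k := by
  obtain ⟨p, hp, hpl⟩ := hconn.exists_path_of_dist r v
  have hnn : ¬ p.Nil := by
    rw [Walk.nil_iff_length_eq]; omega
  obtain ⟨u, ha, q, rfl⟩ := Walk.not_nil_iff.mp hnn
  obtain ⟨x, q', h', hc⟩ := Walk.exists_cons_eq_concat ha q
  rw [hc] at hp hpl
  obtain ⟨hq'p, hvq'⟩ := (isPath_concat_iff q' h').mp hp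
  have hxd : T.dist r x = k := by
    have := path_length_eq_dist hconn hacyc hq'p
    rw [Walk.length_concat] at hpl
    omega
  refine ⟨x, ⟨h', hxd⟩, ?_⟩
  rintro w ⟨hadj, hwd⟩
  obtain ⟨pw, hpw, hpwl⟩ := hconn.exists_path_of_dist r w
  have hvpw : v ∉ pw.support := by
    intro hmem
    have := dist_le_of_mem_support hconn hacyc hpw hmem
    omega
  have h6 : (pw.concat hadj).IsPath := (isPath_concat_iff pw hadj).mpr ⟨hpw, hvpw⟩
  have h7 := hacyc.path_unique ⟨pw.concat hadj, h6⟩ ⟨q'.concat h', hp⟩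
  obtain ⟨hwx, -⟩ := Walk.concat_inj (congrArg Subtype.val h7)
  exact hwx

lemma walk_support_subset (hacyc : T.IsAcyclic) {u v : V} {q : T.Walk u v} (hq : q.IsPath)
    (p : T.Walk u v) : q.support ⊆ p.support := by
  have h := hacyc.path_unique ⟨q, hq⟩ ⟨p.bypass, p.bypass_isPath⟩
  rw [show q = p.bypass from congrArg Subtype.val h]
  exact p.support_bypass_subset


lemma sdist_eq_top (hacyc : T.IsAcyclic) {S : Set V} {u v : V} {q : T.Walk u v}
    (hq : q.IsPath) {x : V} (hx : x ∈ q.support) (hxS : x ∈ S) (hxv : x ≠ v) :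
    sdist T S u v = ⊤ := by
  haveI : IsEmpty {p : T.Walk u v // ∀ x ∈ p.support, x ∈ S → x = v} := by
    constructor; rintro ⟨p, hp⟩
    exact hxv (hp x (walk_support_subset hacyc hq p hx) hxS)
  exact iInf_of_empty _

lemma sdist_eq_dist (hconn : T.Connected) (hacyc : T.IsAcyclic) {S : Set V} {u v : V}
    {q : T.Walk u v} (hq : q.IsPath) (hfree : ∀ x ∈ q.support, x ∈ S → x = v) :
    sdist T S u v = (T.dist u v : ℕ∞) := by
  apply le_antisymm
  · refine iInf_le_of_le ⟨q, hfree⟩ ?_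
    rw [path_length_eq_dist hconn hacyc hq]
  · apply le_iInf
    rintro ⟨p, hp⟩
    exact_mod_cast dist_le p

lemma prob_sum (A B : Finset V) (hAB : Disjoint A B) (p : ℝ) :
    ∑ S : Finset V,
      (if A ⊆ S ∧ Disjoint B S then p ^ S.card * (1-p) ^ (Fintype.card V - S.card) else 0)
      = p ^ A.card * (1-p) ^ B.card := by
  have key := Fintype.prod_add (fun a => if a ∈ B then (0:ℝ) else p)
    (fun a => if a ∈ A then (0:ℝ) else (1-p))
  have hterm : ∀ S : Finset V,
      (∏ a ∈ S, (if a ∈ B then (0:ℝ) else p)) * ∏ a ∈ Sᶜ, (if a ∈ A then (0:ℝ) else (1-p))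
      = (if A ⊆ S ∧ Disjoint B S then p ^ S.card * (1-p) ^ (Fintype.card V - S.card) else 0) := by
    intro S
    by_cases h : A ⊆ S ∧ Disjoint B S
    · rw [if_pos h]
      have e1 : (∏ a ∈ S, (if a ∈ B then (0:ℝ) else p)) = p ^ S.card :=
        Finset.prod_eq_pow_card
          (fun a ha => if_neg (fun hB => Finset.disjoint_left.mp h.2 hB ha))
      have e2 : (∏ a ∈ Sᶜ, (if a ∈ A then (0:ℝ) else (1-p)))
          = (1-p) ^ (Fintype.card V - S.card) := by
        rw [← Finset.card_compl]
        exact Finset.prod_eq_pow_card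
          (fun a ha => if_neg (fun hA => (Finset.mem_compl.mp ha) (h.1 hA)))
      rw [e1, e2]
    · rw [if_neg h]
      rw [not_and_or] at h
      rcases h with h | h
      · obtain ⟨a, haA, haS⟩ := Finset.not_subset.mp h
        have e3 : (∏ a ∈ Sᶜ, (if a ∈ A then (0:ℝ) else (1-p))) = 0 :=
          Finset.prod_eq_zero (Finset.mem_compl.mpr haS) (if_pos haA)
        rw [e3, mul_zero]
      · obtain ⟨a, haB, haS⟩ := Finset.not_disjoint_iff.mp h
        have e4 : (∏ a ∈ S, (if a ∈ B then (0:ℝ) else p)) = 0 :=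
          Finset.prod_eq_zero haS (if_pos haB)
        rw [e4, zero_mul]
  rw [← Finset.sum_congr rfl (fun S _ => (hterm S)), ← key]
  have h1 : ∀ a : V, ((if a ∈ B then (0:ℝ) else p) + (if a ∈ A then (0:ℝ) else (1-p)))
      = (if a ∈ A then p else if a ∈ B then (1-p) else 1) := by
    intro a
    by_cases hA : a ∈ A
    · have hB : a ∉ B := fun hB => Finset.disjoint_left.mp hAB hA hB
      simp only [hA, hB, if_true, if_false]; ring
    · by_cases hB : a ∈ B <;> simp only [hA, hB, if_true, if_false] <;> ring
  rw [Finset.prod_congr rfl (fun a _ => h1 a), ← Finset.prod_mul_prod_compl (A ∪ B)]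
  have h2 : ∏ a ∈ (A ∪ B)ᶜ, (if a ∈ A then p else if a ∈ B then (1-p) else 1) = 1 := by
    apply Finset.prod_eq_one
    intro a ha
    rw [Finset.mem_compl, Finset.mem_union] at ha
    push_neg at ha
    rw [if_neg ha.1, if_neg ha.2]
  have h3 : (∏ a ∈ A, (if a ∈ A then p else if a ∈ B then (1-p) else 1)) = p ^ A.card :=
    Finset.prod_eq_pow_card (fun a ha => if_pos ha)
  have h4 : (∏ a ∈ B, (if a ∈ A then p else if a ∈ B then (1-p) else 1)) = (1-p) ^ B.card :=
    Finset.prod_eq_pow_card (fun a ha => by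
      rw [if_neg (fun hA => Finset.disjoint_left.mp hAB hA ha), if_pos ha])
  rw [h2, mul_one, Finset.prod_union hAB, h3, h4]

lemma card_level_one (hconn : T.Connected) (hroot : T.degree r = 3) :
    (univ.filter (fun v => T.dist r v = 1)).card = 3 := by
  have h : (univ.filter (fun v => T.dist r v = 1)) = T.neighborFinset r := by
    ext w
    simp only [Finset.mem_filter, Finset.mem_univ, true_and, SimpleGraph.mem_neighborFinset]
    exact dist_eq_one_iff_adj
  rw [h, card_neighborFinset_eq_degree, hroot]

lemma card_level_succ (hconn : T.Connected) (hacyc : T.IsAcyclic) (r : V) {d i : ℕ}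
    (hinner : ∀ v, v ≠ r → T.dist r v < d → T.degree v = 3)
    (h1 : 1 ≤ i) (hid : i < d) :
    (univ.filter fun v => T.dist r v = i+1).card
      = 2 * (univ.filter fun v => T.dist r v = i).card := by
  classical
  set f : V → V := fun v => if h : T.dist r v = i + 1
      then (exists_unique_parent hconn hacyc r h).exists.choose else v with hf
  have hfspec : ∀ v (h : T.dist r v = i+1), T.Adj (f v) v ∧ T.dist r (f v) = i := by
    intro v h
    simp only [hf, dif_pos h]
    exact (exists_unique_parent hconn hacyc r h).exists.choose_spec
  have hmaps : ∀ v ∈ univ.filter (fun v => T.dist r v = i+1),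
      f v ∈ univ.filter (fun v => T.dist r v = i) := by
    intro v hv
    rw [Finset.mem_filter] at *
    exact ⟨Finset.mem_univ _, (hfspec v hv.2).2⟩
  rw [Finset.card_eq_sum_card_fiberwise hmaps]
  have hfiber : ∀ u ∈ univ.filter (fun v => T.dist r v = i),
      ((univ.filter fun v => T.dist r v = i+1).filter fun v => f v = u).card = 2 := by
    intro u hu
    rw [Finset.mem_filter] at hu
    have hune : u ≠ r := by
      intro h
      rw [h, SimpleGraph.dist_self] at hu
      omega
    have hC : ((univ.filter fun v => T.dist r v = i+1).filter fun v => f v = u)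
        = (T.neighborFinset u).filter (fun w => T.dist r w = i+1) := by
      ext v
      simp only [Finset.mem_filter, Finset.mem_univ, true_and,
        SimpleGraph.mem_neighborFinset]
      constructor
      · rintro ⟨hd, hfv⟩
        have hs := hfspec v hd
        rw [hfv] at hs
        exact ⟨hs.1, hd⟩
      · rintro ⟨hadj, hd⟩
        exact ⟨hd, (exists_unique_parent hconn hacyc r hd).unique
          ⟨(hfspec v hd).1, (hfspec v hd).2⟩ ⟨hadj, hu.2⟩⟩
    rw [hC]
    -- the parent of u
    have hu' : T.dist r u = (i - 1) + 1 := by omega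
    obtain ⟨w0, hw0, hw0u⟩ := exists_unique_parent hconn hacyc r hu'
    have hP : (T.neighborFinset u).filter (fun w => ¬ (T.dist r w = i+1)) = {w0} := by
      ext w
      simp only [Finset.mem_filter, SimpleGraph.mem_neighborFinset, Finset.mem_singleton]
      constructor
      · rintro ⟨hadj, hne⟩
        have := adj_dist hconn hacyc r hadj
        rw [hu.2] at this
        have hwd : T.dist r w = i - 1 := by omega
        exact hw0u w ⟨hadj.symm, hwd⟩
      · rintro rfl
        refine ⟨hw0.1.symm, ?_⟩
        omega
    have hdeg : (T.neighborFinset u).card = 3 := by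
      rw [card_neighborFinset_eq_degree]
      exact hinner u hune (by omega)
    have hsplit := Finset.card_filter_add_card_filter_not
      (s := T.neighborFinset u) (p := fun w => T.dist r w = i+1)
    rw [hP, hdeg, Finset.card_singleton] at hsplit
    omega
  rw [Finset.sum_congr rfl hfiber, Finset.sum_const, smul_eq_mul, mul_comm]

lemma card_level (hconn : T.Connected) (hacyc : T.IsAcyclic) (r : V) {d : ℕ}
    (hroot : T.degree r = 3)
    (hinner : ∀ v, v ≠ r → T.dist r v < d → T.degree v = 3)
    {i : ℕ} (h1 : 1 ≤ i) (hid : i ≤ d) :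
    (univ.filter (fun v => T.dist r v = i)).card = 3 * 2 ^ (i - 1) := by
  induction i with
  | zero => omega
  | succ i ih =>
    rcases Nat.eq_zero_or_pos i with rfl | hi
    · simpa using card_level_one hconn hroot
    · rw [card_level_succ hconn hacyc r hinner hi (by omega), ih hi (by omega)]
      have : i + 1 - 1 = (i - 1) + 1 := by omega
      rw [this, pow_succ]
      ring


end

theorem stmt12 {V : Type*} [Fintype V] [DecidableEq V] (T : SimpleGraph V) [DecidableRel T.Adj]
    (hconn : T.Connected) (hacyc : T.IsAcyclic) (r : V) (d : ℕ) (hd : 1 ≤ d)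
    (hroot : T.degree r = 3)
    (hdist : ∀ v, T.dist r v ≤ d)
    (hinner : ∀ v, v ≠ r → T.dist r v < d → T.degree v = 3)
    (hleaf : ∀ v, T.dist r v = d → T.degree v = 1)
    (p : ℝ) (hp0 : 0 ≤ p) (hp1 : p ≤ 1) :
    ∑ S : Finset V, p ^ S.card * (1 - p) ^ (Fintype.card V - S.card) * expWeight T S r =
      2 * p + 3 * (1 - p) * (1 - (1 - p) ^ d) := by
  classical
  choose P hPpath hPlen using fun v => hconn.exists_path_of_dist r v
  set Bv : V → Finset V := fun v => ((P v).support.toFinset.erase v) with hBvdef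
  have hBcard : ∀ v, (Bv v).card = T.dist r v := by
    intro v
    have hn := (hPpath v).support_nodup
    have h1 : v ∈ (P v).support.toFinset := by
      simp [Walk.end_mem_support]
    rw [hBvdef]
    simp only
    rw [Finset.card_erase_of_mem h1, List.toFinset_card_of_nodup hn]
    have := (P v).length_support
    have := hPlen v
    omega
  have hvB : ∀ v, v ∉ Bv v := fun v => Finset.notMem_erase v _
  have hcond : ∀ (S : Finset V) (v : V),
      (∀ x ∈ (P v).support, x ∈ (↑S : Set V) → x = v) ↔ Disjoint (Bv v) S := by
    intro S v
    constructor
    · intro h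
      rw [Finset.disjoint_left]
      intro x hxB hxS
      rw [hBvdef] at hxB
      simp only [Finset.mem_erase, List.mem_toFinset] at hxB
      exact hxB.1 (h x hxB.2 hxS)
    · intro h x hx hxS
      by_contra hne
      refine Finset.disjoint_left.mp h ?_ hxS
      rw [hBvdef]
      simp only [Finset.mem_erase, List.mem_toFinset]
      exact ⟨hne, hx⟩
  have hterm : ∀ (S : Finset V), ∀ v ∈ S,
      (if sdist T (↑S) r v = ⊤ then (0:ℝ) else 2 * (1/2:ℝ) ^ (sdist T (↑S) r v).toNat)
      = if Disjoint (Bv v) S then 2 * (1/2:ℝ) ^ (T.dist r v) else 0 := by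
    intro S v hv
    by_cases hdis : Disjoint (Bv v) S
    · have h : sdist T (↑S) r v = (T.dist r v : ℕ∞) :=
        sdist_eq_dist hconn hacyc (hPpath v) ((hcond S v).mpr hdis)
      rw [h, if_pos hdis, if_neg (by exact_mod_cast ENat.coe_ne_top _)]
      simp
    · obtain ⟨x, hxB, hxS⟩ := Finset.not_disjoint_iff.mp hdis
      have hxB' := hxB
      rw [hBvdef] at hxB'
      simp only [Finset.mem_erase, List.mem_toFinset] at hxB'
      have h : sdist T (↑S) r v = ⊤ :=
        sdist_eq_top hacyc (hPpath v) hxB'.2 (Finset.mem_coe.mpr hxS) hxB'.1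
      rw [h, if_pos rfl, if_neg hdis]
  have step1 : ∀ S : Finset V,
      p ^ S.card * (1-p) ^ (Fintype.card V - S.card) * expWeight T S r
      = ∑ v : V, (if {v} ⊆ S ∧ Disjoint (Bv v) S then
          p ^ S.card * (1-p) ^ (Fintype.card V - S.card) else 0)
          * (2 * (1/2:ℝ) ^ (T.dist r v)) := by
    intro S
    rw [expWeight, Finset.mul_sum]
    have e1 : ∀ v : V,
        (if {v} ⊆ S ∧ Disjoint (Bv v) S then
          p ^ S.card * (1-p) ^ (Fintype.card V - S.card) else 0)
          * (2 * (1/2:ℝ) ^ (T.dist r v))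
        = if v ∈ S then (p ^ S.card * (1-p) ^ (Fintype.card V - S.card) *
            (if Disjoint (Bv v) S then 2 * (1/2:ℝ) ^ (T.dist r v) else 0)) else 0 := by
      intro v
      simp only [Finset.singleton_subset_iff]
      by_cases h1 : v ∈ S <;> by_cases h2 : Disjoint (Bv v) S <;>
        simp [h1, h2]
    rw [Finset.sum_congr rfl (fun v _ => e1 v), Finset.sum_ite_mem, Finset.univ_inter]
    exact Finset.sum_congr rfl (fun v hv => by rw [hterm S v hv])
  rw [Finset.sum_congr rfl (fun S _ => step1 S), Finset.sum_comm]
  have step2 : ∀ v : V,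
      (∑ S : Finset V, (if {v} ⊆ S ∧ Disjoint (Bv v) S then
          p ^ S.card * (1-p) ^ (Fintype.card V - S.card) else 0)
          * (2 * (1/2:ℝ) ^ (T.dist r v)))
      = (p * (1-p) ^ (T.dist r v)) * (2 * (1/2:ℝ) ^ (T.dist r v)) := by
    intro v
    rw [← Finset.sum_mul]
    congr 1
    have := prob_sum {v} (Bv v) (Finset.disjoint_singleton_left.mpr (hvB v)) p
    rw [Finset.card_singleton, hBcard v, pow_one] at this
    exact this
  rw [Finset.sum_congr rfl (fun v _ => step2 v)]
  -- group by distance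
  have hmaps2 : ∀ v ∈ (univ : Finset V), T.dist r v ∈ Finset.range (d+1) :=
    fun v _ => Finset.mem_range.mpr (Nat.lt_succ_of_le (hdist v))
  rw [← Finset.sum_fiberwise_of_maps_to hmaps2
    (fun v => (p * (1-p) ^ (T.dist r v)) * (2 * (1/2:ℝ) ^ (T.dist r v)))]
  have step3 : ∀ i ∈ Finset.range (d+1),
      (∑ v ∈ univ.filter (fun v => T.dist r v = i),
        (p * (1-p) ^ (T.dist r v)) * (2 * (1/2:ℝ) ^ (T.dist r v)))
      = ((univ.filter (fun v => T.dist r v = i)).card : ℝ)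
          * ((p * (1-p) ^ i) * (2 * (1/2:ℝ) ^ i)) := by
    intro i _
    rw [Finset.sum_congr rfl (fun v hv => by
      rw [(Finset.mem_filter.mp hv).2]), Finset.sum_const, nsmul_eq_mul]
  rw [Finset.sum_congr rfl step3, Finset.sum_range_succ']
  have hlvl0 : (univ.filter (fun v => T.dist r v = 0)) = {r} := by
    ext v
    simp only [Finset.mem_filter, Finset.mem_univ, true_and, Finset.mem_singleton]
    rw [hconn.dist_eq_zero_iff]
    exact comm
  have hterm0 : ((univ.filter (fun v => T.dist r v = 0)).card : ℝ)
      * ((p * (1-p) ^ 0) * (2 * (1/2:ℝ) ^ 0)) = 2 * p := by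
    rw [hlvl0, Finset.card_singleton]
    norm_num
    ring
  have hterms : ∀ i ∈ Finset.range d,
      ((univ.filter (fun v => T.dist r v = i+1)).card : ℝ)
        * ((p * (1-p) ^ (i+1)) * (2 * (1/2:ℝ) ^ (i+1)))
      = 3 * p * (1-p) ^ (i+1) := by
    intro i hi
    rw [Finset.mem_range] at hi
    rw [card_level hconn hacyc r hroot hinner (Nat.le_add_left 1 i) (by omega)]
    have h2i : (2:ℝ)^i * (1/2:ℝ)^i = 1 := by
      rw [← mul_pow]; norm_num
    have : ((3 * 2 ^ (i + 1 - 1) : ℕ) : ℝ) = 3 * 2^i := by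
      push_cast [Nat.add_sub_cancel]
      ring
    rw [this, pow_succ (1/2:ℝ)]
    linear_combination (3*p*(1-p)^(i+1)) * h2i
  rw [hterm0, Finset.sum_congr rfl hterms]
  have geom := geom_sum_mul (1-p : ℝ) d
  have hsum : (∑ i ∈ Finset.range d, 3 * p * (1-p) ^ (i+1))
      = 3 * (1-p) * (1 - (1-p)^d) := by
    have e : ∀ i, (3:ℝ) * p * (1-p) ^ (i+1) = (3 * p * (1-p)) * (1-p) ^ i := by
      intro i; rw [pow_succ]; ring
    rw [Finset.sum_congr rfl (fun i _ => e i), ← Finset.mul_sum]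
    linear_combination (-3*(1-p)) * geom
  rw [hsum]
  ring
end
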